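/- arXiv:1110.2933 — 2 statements merged into one kernel-verified Lean document; each statement's English description precedes it below -/
import Mathlib

section
/- If a finite simple graph has at most k holes, then its competition number is at most k + 1. -/
namespace CompKim

open SimpleGraph

variable {V : Type*}

/-- `s` is the vertex set of an induced cycle (possibly a triangle) of `G`. -/
def IsInducedCycleOn (G : SimpleGraph V) (s : Set V) : Prop :=
  ∃ (v : V) (c : G.Walk v v), c.IsCycle ∧ c.toSubgraph.IsInduced ∧ c.toSubgraph.verts = s

/-- A vertex is good if every two distinct non-adjacent neighbors lie with it on an
induced cycle. -/
def IsGood (G : SimpleGraph V) (v : V) : Prop :=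
  ∀ u u' : V, u ≠ u' → G.Adj v u → G.Adj v u' → ¬ G.Adj u u' →
    ∃ s : Set V, IsInducedCycleOn G s ∧ v ∈ s ∧ u ∈ s ∧ u' ∈ s

/-- A hole is an induced cycle on at least 4 vertices. -/
def IsHole (G : SimpleGraph V) (s : Set V) : Prop :=
  IsInducedCycleOn G s ∧ 4 ≤ s.ncard

/-- The number of holes of `G`. -/
noncomputable def holeCount (G : SimpleGraph V) : ℕ := {s : Set V | IsHole G s}.ncard

/-- The number of holes of `G` containing `v`. -/
noncomputable def holeCountAt (G : SimpleGraph V) (v : V) : ℕ :=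
  {s : Set V | IsHole G s ∧ v ∈ s}.ncard

/-- The competition graph of a digraph given as a relation: distinct vertices are
adjacent iff they have a common out-neighbor. -/
def competitionGraph {W : Type*} (D : W → W → Prop) : SimpleGraph W where
  Adj a b := a ≠ b ∧ ∃ w, D a w ∧ D b w
  symm := by constructor; rintro a b ⟨hab, w, h1, h2⟩; exact ⟨hab.symm, w, h2, h1⟩
  loopless := by constructor; rintro a ⟨h, -⟩; exact h rfl

/-- A relation is a DAG relation if it admits no directed cycle. -/
def IsDagRel {W : Type*} (D : W → W → Prop) : Prop := ∀ w, ¬ Relation.TransGen D w w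

/-- `G` together with `k` added isolated vertices. -/
def addIsolated {V : Type*} (G : SimpleGraph V) (k : ℕ) : SimpleGraph (V ⊕ Fin k) where
  Adj a b := ∃ u v, a = Sum.inl u ∧ b = Sum.inl v ∧ G.Adj u v
  symm := by constructor; rintro a b ⟨u, v, rfl, rfl, h⟩; exact ⟨v, u, rfl, rfl, h.symm⟩
  loopless := by
    constructor
    rintro a ⟨u, v, rfl, heq, hadj⟩
    cases Sum.inl.inj heq
    exact hadj.ne rfl

/-- The competition number: the least `k` such that `G` plus `k` isolated vertices is
the competition graph of a directed acyclic graph. -/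
noncomputable def competitionNumber {V : Type*} (G : SimpleGraph V) : ℕ :=
  sInf {k | ∃ D : (V ⊕ Fin k) → (V ⊕ Fin k) → Prop,
    IsDagRel D ∧ competitionGraph D = addIsolated G k}

/-! ### Auxiliary infrastructure -/

/-- The restriction of a graph to a set of vertices. -/
def rOn (G : SimpleGraph V) (S : Set V) : SimpleGraph V where
  Adj x y := G.Adj x y ∧ x ∈ S ∧ y ∈ S
  symm := ⟨fun x y ⟨h, hx, hy⟩ => ⟨h.symm, hy, hx⟩⟩
  loopless := ⟨fun x ⟨h, _, _⟩ => G.loopless.irrefl x h⟩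

lemma rOn_adj {G : SimpleGraph V} {S : Set V} {x y : V} :
    (rOn G S).Adj x y ↔ G.Adj x y ∧ x ∈ S ∧ y ∈ S := Iff.rfl

/-- The graph `G` restricted to `A`, with the set `T` turned into a clique. -/
def vG (G : SimpleGraph V) (A T : Set V) : SimpleGraph V where
  Adj x y := x ≠ y ∧ x ∈ A ∧ y ∈ A ∧ (G.Adj x y ∨ (x ∈ T ∧ y ∈ T))
  symm := ⟨fun x y ⟨h, hx, hy, hor⟩ =>
    ⟨h.symm, hy, hx, by rcases hor with h' | ⟨h1, h2⟩; exact Or.inl h'.symm; exact Or.inr ⟨h2, h1⟩⟩⟩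
  loopless := ⟨fun x ⟨h, _⟩ => h rfl⟩

lemma vG_adj {G : SimpleGraph V} {A T : Set V} {x y : V} :
    (vG G A T).Adj x y ↔ x ≠ y ∧ x ∈ A ∧ y ∈ A ∧ (G.Adj x y ∨ (x ∈ T ∧ y ∈ T)) := Iff.rfl

lemma reachable_of_adj_imp {P Q : SimpleGraph V} {u w : V}
    (h : ∀ x y, P.Adj x y → Q.Reachable x y) (hr : P.Reachable u w) : Q.Reachable u w := by
  obtain ⟨p⟩ := hr
  induction p with
  | nil => exact Reachable.refl _
  | cons ha _ ih => exact (h _ _ ha).trans ih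

lemma reachable_of_walk_support {P Q : SimpleGraph V} {C : Set V} {u w : V}
    (p : P.Walk u w) (hsupp : ∀ x ∈ p.support, x ∈ C)
    (h : ∀ x y, P.Adj x y → x ∈ C → y ∈ C → Q.Reachable x y) : Q.Reachable u w := by
  induction p with
  | nil => exact Reachable.refl _
  | @cons a b c ha p ih =>
    refine (h a b ha (hsupp _ ?_) (hsupp _ ?_)).trans (ih fun x hx => hsupp _ ?_)
    · simp
    · simp [Walk.support_cons]
    · simp [Walk.support_cons, hx]

lemma rOn_support_mem {G : SimpleGraph V} {S : Set V} {u w : V} (p : (rOn G S).Walk u w)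
    (hu : u ∈ S) : ∀ x ∈ p.support, x ∈ S := by
  induction p with
  | nil => intro x hx; simp at hx; rwa [hx]
  | @cons a b c ha p ih =>
    intro x hx
    rw [Walk.support_cons, List.mem_cons] at hx
    rcases hx with rfl | hx
    · exact hu
    · exact ih ha.2.2 x hx

lemma rOn_reachable_mem {G : SimpleGraph V} {S : Set V} {u x : V}
    (h : (rOn G S).Reachable u x) (hu : u ∈ S) : x ∈ S := by
  obtain ⟨p⟩ := h
  exact rOn_support_mem p hu x p.end_mem_support

lemma exists_min_separator [Finite V] (H : SimpleGraph V) (A : Set V) (a b : V)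
    (hab : a ≠ b) (hnadj : ¬ H.Adj a b) :
    ∃ S ⊆ A \ {a, b}, ¬ (rOn H (A \ S)).Reachable a b ∧
      ∀ S' ⊆ A \ {a, b}, ¬ (rOn H (A \ S')).Reachable a b → S.ncard ≤ S'.ncard := by
  have hbase : ¬ (rOn H (A \ (A \ {a, b}))).Reachable a b := by
    rintro ⟨p⟩
    cases p with
    | nil => exact hab rfl
    | cons ha q =>
      rename_i y
      obtain ⟨hadj, -, hy⟩ := ha
      have hy2 : y ∈ ({a, b} : Set V) := by
        by_contra h; exact hy.2 ⟨hy.1, h⟩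
      rcases hy2 with rfl | rfl
      · exact H.loopless.irrefl _ hadj
      · exact hnadj hadj
  set 𝒮 : Set (Set V) := {S | S ⊆ A \ {a, b} ∧ ¬ (rOn H (A \ S)).Reachable a b} with h𝒮
  have hne : (Set.ncard '' 𝒮).Nonempty := ⟨(A \ {a, b}).ncard, ⟨A \ {a, b}, ⟨le_refl _, hbase⟩, rfl⟩⟩
  obtain ⟨S, hS𝒮, hScard⟩ := Nat.sInf_mem hne
  refine ⟨S, hS𝒮.1, hS𝒮.2, fun S' hS'A hS' => ?_⟩
  rw [hScard]
  exact Nat.sInf_le ⟨S', ⟨hS'A, hS'⟩, rfl⟩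

lemma sep_attach [Finite V] (H : SimpleGraph V) (A : Set V) (a b : V) (S : Set V)
    (hSA : S ⊆ A \ {a, b})
    (hSsep : ¬ (rOn H (A \ S)).Reachable a b)
    (hmin : ∀ S' ⊆ A \ {a, b}, ¬ (rOn H (A \ S')).Reachable a b → S.ncard ≤ S'.ncard)
    {s : V} (hs : s ∈ S) : ∃ x, H.Adj s x ∧ (rOn H (A \ S)).Reachable b x := by
  classical
  have hsb : s ≠ b := fun h => ((hSA hs).2 (by simp [h]))
  -- S \ {s} is not a separator
  have hreach : (rOn H (A \ (S \ {s}))).Reachable a b := by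
    by_contra hcon
    have hlt : (S \ {s}).ncard < S.ncard :=
      Set.ncard_diff_singleton_lt_of_mem hs (Set.toFinite _)
    have := hmin (S \ {s}) (fun x hx => hSA hx.1) hcon
    omega
  obtain ⟨p⟩ := hreach
  have hs_supp : s ∈ p.support := by
    by_contra hcon
    refine hSsep (reachable_of_walk_support p (C := {x | x ≠ s})
      (fun x hx => ?_) (fun x y hxy hx hy => Adj.reachable ⟨hxy.1, ?_, ?_⟩))
    · intro h; exact hcon (h ▸ hx)
    · exact ⟨hxy.2.1.1, fun hxs => (hxy.2.1.2 ⟨hxs, hx⟩)⟩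
    · exact ⟨hxy.2.2.1, fun hys => (hxy.2.2.2 ⟨hys, hy⟩)⟩
  -- take the reverse walk from b, go until s; the vertex right after s on it works
  have hs_supp' : s ∈ p.reverse.support := by rwa [Walk.support_reverse, List.mem_reverse]
  set q := p.reverse.takeUntil s hs_supp' with hq
  have hcount : q.support.count s = 1 := p.reverse.count_support_takeUntil_eq_one hs_supp'
  have hqnil : ¬ q.reverse.Nil := by
    rw [Walk.not_nil_iff_lt_length, Walk.length_reverse]
    rcases Nat.eq_zero_or_pos q.length with h0 | h; swap
    · exact h
    · exact absurd (Walk.eq_of_length_eq_zero h0).symm hsb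
  obtain ⟨x, hadj, r', hr'⟩ := Walk.not_nil_iff.mp hqnil
  have hs_not_r' : s ∉ r'.support := by
    have : q.reverse.support = s :: r'.support := by rw [hr', Walk.support_cons]
    have hcount' : q.reverse.support.count s = 1 := by
      rwa [Walk.support_reverse, List.count_reverse]
    rw [this, List.count_cons_self] at hcount'
    intro hmem
    have := List.count_pos_iff.mpr hmem  -- 0 < count
    omega
  refine ⟨x, hadj.1, ?_⟩
  have : (rOn H (A \ S)).Reachable x b := by
    refine reachable_of_walk_support r' (C := {z | z ≠ s}) (fun z hz => ?_)
      (fun z y hzy hz hy => Adj.reachable ⟨hzy.1, ?_, ?_⟩)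
    · intro h; exact hs_not_r' (h ▸ hz)
    · exact ⟨hzy.2.1.1, fun hzs => (hzy.2.1.2 ⟨hzs, hz⟩)⟩
    · exact ⟨hzy.2.2.1, fun hys => (hzy.2.2.2 ⟨hys, hy⟩)⟩
  exact this.symm



/-- The conclusion of the good-vertex lemma, relative to the virtual graph `vG G A T`. -/
abbrev Conc (G : SimpleGraph V) (A T : Set V) (v : V) : Prop :=
  ∀ u w : V, u ≠ w → (vG G A T).Adj v u → (vG G A T).Adj v w → ¬ (vG G A T).Adj u w →
    (rOn (vG G A T) ((A \ {x | x = v ∨ (vG G A T).Adj v x}) ∪ {u, w})).Reachable u w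

lemma goodstep [Finite V] (G : SimpleGraph V) (n : ℕ)
    (ih : ∀ A T : Set V, A.ncard ≤ n → T ⊆ A → (A \ T).Nonempty →
      ∃ v ∈ A \ T, Conc G A T v)
    (A T : Set V) (hAn : A.ncard ≤ n + 1) (hTA : T ⊆ A)
    (a b : V) (ha : a ∈ A) (hb : b ∈ A)
    (S : Set V) (hSA : S ⊆ A \ {a, b})
    (hSsep : ¬ (rOn (vG G A T) (A \ S)).Reachable a b)
    (hattach : ∀ s ∈ S, ∃ x, (vG G A T).Adj s x ∧ (rOn (vG G A T) (A \ S)).Reachable b x)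
    (hTa : ∀ t ∈ T, t ∉ S → ¬ (rOn (vG G A T) (A \ S)).Reachable a t) :
    ∃ v ∈ A \ T, Conc G A T v := by
  classical
  set H := vG G A T with hH
  set A₁ : Set V := {x | (rOn H (A \ S)).Reachable a x} with hA₁
  set B₁ : Set V := {x | (rOn H (A \ S)).Reachable b x} with hB₁
  have haAS : a ∈ A \ S := ⟨ha, fun h => (hSA h).2 (by simp)⟩
  have hbAS : b ∈ A \ S := ⟨hb, fun h => (hSA h).2 (by simp)⟩
  have hA₁sub : A₁ ⊆ A \ S := fun x hx => rOn_reachable_mem hx haAS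
  have hB₁sub : B₁ ⊆ A \ S := fun x hx => rOn_reachable_mem hx hbAS
  have hdisj : ∀ x, x ∈ A₁ → x ∈ B₁ → False := fun x h1 h2 => hSsep (Reachable.trans h1 (Reachable.symm h2))
  set A'' : Set V := A₁ ∪ S with hA''
  have hA''A : A'' ⊆ A := fun x hx => by
    rcases hx with hx | hx
    · exact (hA₁sub hx).1
    · exact (hSA hx).1
  have hbA'' : b ∉ A'' := fun h => by
    rcases h with h | h
    · exact hdisj b h (Reachable.refl _)
    · exact (hSA h).2 (by simp)
  have hcard : A''.ncard ≤ n := by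
    have h1 : A'' ⊆ A \ {b} := fun x hx => ⟨hA''A hx, fun hxb => hbA'' (by
      have : x = b := hxb
      rw [← this]; exact hx)⟩
    have h2 : (A \ {b}).ncard < A.ncard := Set.ncard_diff_singleton_lt_of_mem hb (Set.toFinite _)
    have h3 : A''.ncard ≤ (A \ {b}).ncard := Set.ncard_le_ncard h1 (Set.toFinite _)
    omega
  obtain ⟨v, hv, hconc⟩ := ih A'' S hcard (fun x hx => Or.inr hx)
    ⟨a, Or.inl (Reachable.refl _), fun h => (hSA h).2 (by simp)⟩
  have hvA₁ : v ∈ A₁ := by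
    rcases hv.1 with h | h
    · exact h
    · exact absurd h hv.2
  have hvnT : v ∉ T := fun hvT => hTa v hvT hv.2 hvA₁
  have hvA : v ∈ A := hA''A hv.1
  refine ⟨v, ⟨hvA, hvnT⟩, ?_⟩
  set H'' := vG G A'' S with hH''
  have hnbr : ∀ x : V, H.Adj v x → G.Adj v x ∧ x ∈ A'' := by
    intro x hx
    obtain ⟨hne, -, hxA, hor⟩ := hx
    have hGadj : G.Adj v x := by
      rcases hor with h | h
      · exact h
      · exact absurd h.1 hvnT
    refine ⟨hGadj, ?_⟩
    by_cases hxS : x ∈ S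
    · exact Or.inr hxS
    · refine Or.inl (Reachable.trans hvA₁
        (Adj.reachable ⟨⟨hne, hvA, hxA, Or.inl hGadj⟩, hA₁sub hvA₁, ⟨hxA, hxS⟩⟩))
  intro u w huw h1 h2 hn
  obtain ⟨hGvu, huA''⟩ := hnbr u h1
  obtain ⟨hGvw, hwA''⟩ := hnbr w h2
  set X : Set V := (A \ {x | x = v ∨ H.Adj v x}) ∪ {u, w} with hX
  have huX : u ∈ X := Or.inr (by simp)
  have hwX : w ∈ X := Or.inr (by simp)
  have hB₁X : ∀ z ∈ B₁, z ∈ X := by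
    intro z hz
    have hzAS := hB₁sub hz
    refine Or.inl ⟨hzAS.1, ?_⟩
    rintro (rfl | hadj)
    · exact hdisj z hvA₁ hz
    · have h2' := (hnbr z hadj).2
      rcases h2' with h | h
      · exact hdisj z h hz
      · exact hzAS.2 h
  have hclaimB : ∀ z ∈ B₁, (rOn H X).Reachable b z := by
    intro z hz
    obtain ⟨p⟩ := (hz : (rOn H (A \ S)).Reachable b z)
    exact reachable_of_walk_support p (C := B₁) (fun x hx => ⟨p.takeUntil x hx⟩)
      (fun x y hxy hx hy => Adj.reachable ⟨hxy.1, hB₁X x hx, hB₁X y hy⟩)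
  have hrouteS : ∀ x y, x ∈ S → y ∈ S → x ∈ X → y ∈ X → (rOn H X).Reachable x y := by
    intro x y hxS hyS hxX hyX
    obtain ⟨xb, hxb, hxbr⟩ := hattach x hxS
    obtain ⟨yb, hyb, hybr⟩ := hattach y hyS
    have h1' : (rOn H X).Reachable x xb := Adj.reachable ⟨hxb, hxX, hB₁X xb hxbr⟩
    have h2' : (rOn H X).Reachable y yb := Adj.reachable ⟨hyb, hyX, hB₁X yb hybr⟩
    exact h1'.trans (((hclaimB xb hxbr).symm.trans (hclaimB yb hybr)).trans h2'.symm)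
  by_cases hSS : u ∈ S ∧ w ∈ S
  · exact hrouteS u w hSS.1 hSS.2 huX hwX
  · have hnadj'' : ¬ H''.Adj u w := by
      rintro ⟨hne, huA2, hwA2, hor⟩
      rcases hor with h | h
      · exact hn ⟨hne, hA''A huA2, hA''A hwA2, Or.inl h⟩
      · exact hSS h
    have h1'' : H''.Adj v u := ⟨h1.1, hv.1, huA'', Or.inl hGvu⟩
    have h2'' : H''.Adj v w := ⟨h2.1, hv.1, hwA'', Or.inl hGvw⟩
    have hre := hconc u w huw h1'' h2'' hnadj''
    have hX''X : ∀ z, z ∈ (A'' \ {x | x = v ∨ H''.Adj v x}) ∪ {u, w} → z ∈ X := by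
      rintro z (⟨hzA'', hz⟩ | hz)
    
      · refine Or.inl ⟨hA''A hzA'', ?_⟩
        rintro (rfl | hadj)
        · exact hz (Or.inl rfl)
        · exact hz (Or.inr ⟨hadj.1, hv.1, (hnbr z hadj).2, Or.inl (hnbr z hadj).1⟩)
      · exact Or.inr hz
    refine reachable_of_adj_imp (fun x y hxy => ?_) hre
    obtain ⟨⟨hne, hxA'', hyA'', hor⟩, hxm, hym⟩ := hxy
    rcases hor with h | h
    · exact Adj.reachable ⟨⟨hne, hA''A hxA'', hA''A hyA'', Or.inl h⟩, hX''X x hxm, hX''X y hym⟩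
    · exact hrouteS x y h.1 h.2 (hX''X x hxm) (hX''X y hym)

lemma goodrec [Finite V] (G : SimpleGraph V) :
    ∀ n : ℕ, ∀ A T : Set V, A.ncard ≤ n → T ⊆ A → (A \ T).Nonempty →
      ∃ v ∈ A \ T, Conc G A T v := by
  intro n
  induction n with
  | zero =>
    intro A T hA hTA hne
    exfalso
    obtain ⟨v, hv⟩ := hne
    have h1 : A.Nonempty := ⟨v, hv.1⟩
    have := (Set.ncard_pos (Set.toFinite A)).mpr h1
    omega
  | succ n ih =>
    intro A T hA hTA hne
    by_cases hcomp : ∀ x ∈ A, ∀ y ∈ A, x ≠ y → (vG G A T).Adj x y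
    · obtain ⟨v, hv⟩ := hne
      exact ⟨v, hv, fun u w huw h1 h2 hn => absurd (hcomp u h1.2.2.1 w h2.2.2.1 huw) hn⟩
    · push_neg at hcomp
      obtain ⟨a, ha, b, hb, hab, hnadj⟩ := hcomp
      obtain ⟨S, hSA, hSsep, hmin⟩ := exists_min_separator (vG G A T) A a b hab hnadj
      have hattb : ∀ s ∈ S, ∃ x, (vG G A T).Adj s x ∧ (rOn (vG G A T) (A \ S)).Reachable b x :=
        fun s hs => sep_attach _ A a b S hSA hSsep hmin hs
      have hSA' : S ⊆ A \ {b, a} := fun x hx => ⟨(hSA hx).1, fun h => (hSA hx).2 (by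
        rcases h with h | h
        · exact Or.inr h
        · exact Or.inl h)⟩
      have hSsep' : ¬ (rOn (vG G A T) (A \ S)).Reachable b a := fun h => hSsep h.symm
      have hmin' : ∀ S' ⊆ A \ {b, a}, ¬ (rOn (vG G A T) (A \ S')).Reachable b a →
          S.ncard ≤ S'.ncard := by
        intro S' h1 h2
        refine hmin S' (fun x hx => ⟨(h1 hx).1, fun h => (h1 hx).2 (by
          rcases h with h | h
          · exact Or.inr h
          · exact Or.inl h)⟩) (fun h => h2 h.symm)
      have hatta : ∀ s ∈ S, ∃ x, (vG G A T).Adj s x ∧ (rOn (vG G A T) (A \ S)).Reachable a x :=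
        fun s hs => sep_attach _ A b a S hSA' hSsep' hmin' hs
      by_cases hTaside : ∀ t ∈ T, t ∉ S → ¬ (rOn (vG G A T) (A \ S)).Reachable a t
      · exact goodstep G n ih A T hA hTA a b ha hb S hSA hSsep hattb hTaside
      · push_neg at hTaside
        obtain ⟨t0, ht0T, ht0S, ht0r⟩ := hTaside
        have hTbside : ∀ t ∈ T, t ∉ S → ¬ (rOn (vG G A T) (A \ S)).Reachable b t := by
          intro t htT htS hrb
          have htA : t ∈ A \ S := rOn_reachable_mem hrb ⟨hb, fun h => (hSA h).2 (by simp)⟩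
          have ht0A : t0 ∈ A \ S := rOn_reachable_mem ht0r ⟨ha, fun h => (hSA h).2 (by simp)⟩
          have hta : (rOn (vG G A T) (A \ S)).Reachable a t := by
            rcases eq_or_ne t0 t with rfl | hne
            · exact ht0r
            · exact ht0r.trans (Adj.reachable ⟨⟨hne, ht0A.1, htA.1, Or.inr ⟨ht0T, htT⟩⟩, ht0A, htA⟩)
          exact hSsep (hta.trans hrb.symm)
        exact goodstep G n ih A T hA hTA b a hb ha S hSA' hSsep' hatta hTbside


lemma exists_good [Finite V] (G : SimpleGraph V) (A : Set V) (hne : A.Nonempty) :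
    ∃ v ∈ A, ∀ u w : V, u ∈ A → w ∈ A → u ≠ w → G.Adj v u → G.Adj v w → ¬ G.Adj u w →
      (rOn G ((A \ {x | x = v ∨ G.Adj v x}) ∪ {u, w})).Reachable u w := by
  obtain ⟨v, hv, hconc⟩ := goodrec G A.ncard A ∅ le_rfl (Set.empty_subset _) (by simpa using hne)
  refine ⟨v, hv.1, ?_⟩
  intro u w huA hwA huw hvu hvw hnuw
  have h1 : (vG G A ∅).Adj v u := ⟨hvu.ne, hv.1, huA, Or.inl hvu⟩
  have h2 : (vG G A ∅).Adj v w := ⟨hvw.ne, hv.1, hwA, Or.inl hvw⟩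
  have hn : ¬ (vG G A ∅).Adj u w := by
    rintro ⟨-, -, -, h | h⟩
    · exact hnuw h
    · exact h.1
  have hre := hconc u w huw h1 h2 hn
  have hmem : ∀ x, x ∈ (A \ {y | y = v ∨ (vG G A ∅).Adj v y}) ∪ {u, w} →
      x ∈ (A \ {y | y = v ∨ G.Adj v y}) ∪ {u, w} := by
    rintro x (⟨hxA, hx⟩ | hx)
    · refine Or.inl ⟨hxA, ?_⟩
      rintro (rfl | hadj)
      · exact hx (Or.inl rfl)
      · exact hx (Or.inr ⟨hadj.ne, hv.1, hxA, Or.inl hadj⟩)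
    · exact Or.inr hx
  refine reachable_of_adj_imp (fun x y hxy => ?_) hre
  obtain ⟨⟨hne', hxA, hyA, hor⟩, hxm, hym⟩ := hxy
  have hG : G.Adj x y := by
    rcases hor with h | h
    · exact h
    · exact absurd h.1 (Set.notMem_empty x)
  exact Adj.reachable ⟨hG, hmem x hxm, hmem y hym⟩


lemma exists_min_walk {R : SimpleGraph V} {u w : V} (h : R.Reachable u w) :
    ∃ p : R.Walk u w, p.IsPath ∧ ∀ q : R.Walk u w, p.length ≤ q.length := by
  classical
  have hne : {n | ∃ q : R.Walk u w, q.length = n}.Nonempty := ⟨_, h.some, rfl⟩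
  obtain ⟨q, hq⟩ := Nat.sInf_mem hne
  have hmin : ∀ r : R.Walk u w, q.length ≤ r.length := fun r => hq ▸ Nat.sInf_le ⟨r, rfl⟩
  have heq : q.bypass.length = q.length :=
    le_antisymm (Walk.length_bypass_le q) (hmin _)
  exact ⟨q.bypass, Walk.bypass_isPath q, fun r => heq ▸ hmin r⟩

lemma min_walk_chordless {R : SimpleGraph V} : ∀ {u w : V} (p : R.Walk u w),
    (∀ q : R.Walk u w, p.length ≤ q.length) →
    ∀ x y, x ∈ p.support → y ∈ p.support → R.Adj x y → p.toSubgraph.Adj x y := by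
  intro u w p
  induction p with
  | nil =>
    intro _ x y hx hy hadj
    simp only [Walk.support_nil, List.mem_singleton] at hx hy
    subst hx; subst hy; exact absurd hadj (R.loopless.irrefl _)
  | @cons u z w h t ih =>
    intro hmin x y hx hy hadj
    classical
    have htmin : ∀ q : R.Walk z w, t.length ≤ q.length := by
      intro q
      have := hmin (Walk.cons h q)
      simpa using this
    have key : ∀ y', y' ∈ t.support → R.Adj u y' → (Walk.cons h t).toSubgraph.Adj u y' := by
      intro y' hy' hadj'
      rcases eq_or_ne y' z with rfl | hne
      · exact Subgraph.sup_adj.mpr (Or.inl (by simp))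
      · exfalso
        have hlen : (t.takeUntil y' hy').length + (t.dropUntil y' hy').length = t.length := by
          rw [← Walk.length_append, Walk.take_spec]
        have hpos : 0 < (t.takeUntil y' hy').length := by
          rcases Nat.eq_zero_or_pos (t.takeUntil y' hy').length with h0 | h0
          · exact absurd (Walk.eq_of_length_eq_zero h0).symm hne
          · exact h0
        have := hmin (Walk.cons hadj' (t.dropUntil y' hy'))
        simp only [Walk.length_cons] at this
        omega
    rw [Walk.support_cons] at hx hy
    rcases List.mem_cons.mp hx with rfl | hx' <;> rcases List.mem_cons.mp hy with rfl | hy'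
    · exact absurd hadj (R.loopless.irrefl _)
    · exact key y hy' hadj
    · exact (key x hx' hadj.symm).symm
    · exact Subgraph.sup_adj.mpr (Or.inr (ih htmin x y hx' hy' hadj))

lemma walk_toSubgraph_adj {x y : V} {G : SimpleGraph V} {a b : V} (c : G.Walk a b) :
    c.toSubgraph.Adj x y ↔ s(x, y) ∈ c.edges := by
  rw [← Subgraph.mem_edgeSet, Walk.mem_edges_toSubgraph]

lemma exists_hole [Finite V] (G : SimpleGraph V) {A : Set V} {v u w : V}
    (hvA : v ∈ A) (huA : u ∈ A) (hwA : w ∈ A)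
    (hvu : G.Adj v u) (hvw : G.Adj v w) (huw : u ≠ w) (hnuw : ¬ G.Adj u w)
    (hre : (rOn G ((A \ {x | x = v ∨ G.Adj v x}) ∪ {u, w})).Reachable u w) :
    ∃ s : Set V, IsHole G s ∧ s ⊆ A ∧ v ∈ s ∧ {x | x ∈ s ∧ G.Adj v x} = {u, w} := by
  classical
  set X : Set V := (A \ {x | x = v ∨ G.Adj v x}) ∪ {u, w} with hX
  obtain ⟨p, hpath, hmin⟩ := exists_min_walk hre
  have hchord := min_walk_chordless p hmin
  have hsupp : ∀ x ∈ p.support, x ∈ X := rOn_support_mem p (Or.inr (by simp))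
  have hXA : ∀ x ∈ X, x ∈ A := by
    rintro x (⟨hx1, -⟩ | hx2)
    · exact hx1
    · rcases hx2 with rfl | rfl
      · exact huA
      · exact hwA
  have hvX : v ∉ X := by
    rintro (⟨-, hv2⟩ | hv2)
    · exact hv2 (Or.inl rfl)
    · rcases hv2 with rfl | rfl
      · exact G.loopless.irrefl _ hvu
      · exact G.loopless.irrefl _ hvw
  have hvsupp : v ∉ p.support := fun h => hvX (hsupp v h)
  have hXadj : ∀ x ∈ X, G.Adj v x → x = u ∨ x = w := by
    rintro x (⟨-, hx2⟩ | hx2) hadj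
    · exact absurd (Or.inr hadj) hx2
    · exact hx2
  have hlen0 : p.length ≠ 0 := fun h0 => huw (Walk.eq_of_length_eq_zero h0)
  have hlen1 : p.length ≠ 1 := fun h1 => hnuw (Walk.adj_of_length_eq_one h1).1
  -- transfer to G
  have htrans : ∀ e ∈ p.edges, e ∈ G.edgeSet := by
    intro e he
    have h1 := Walk.edges_subset_edgeSet p he
    have hle : rOn G X ≤ G := fun a b hab => hab.1
    exact (edgeSet_subset_edgeSet.mpr hle) h1
  set pG := p.transfer G htrans with hpG
  have hpGsupp : pG.support = p.support := Walk.support_transfer _ _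
  have hpGedges : pG.edges = p.edges := Walk.edges_transfer _ _
  have hpGpath : pG.IsPath := by
    rw [Walk.isPath_def, hpGsupp]
    exact hpath.support_nodup
  set q : G.Walk u v := pG.concat hvw.symm with hq
  have hqsupp : q.support = p.support ++ [v] := by
    rw [hq, Walk.support_concat, hpGsupp]
  have hqedges : q.edges = p.edges ++ [s(w, v)] := by
    rw [hq, Walk.edges_concat, hpGedges, List.concat_eq_append]
  set c : G.Walk v v := Walk.cons hvu q with hc
  have hcedges : c.edges = s(v, u) :: (p.edges ++ [s(w, v)]) := by
    rw [hc, Walk.edges_cons, hqedges]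
  have hcsupp : c.support = v :: (p.support ++ [v]) := by
    rw [hc, Walk.support_cons, hqsupp]
  set s : Set V := {x | x ∈ c.support} with hs
  have hmem_s : ∀ x, x ∈ s ↔ x = v ∨ x ∈ p.support := by
    intro x
    simp only [hs, Set.mem_setOf_eq, hcsupp, List.mem_cons, List.mem_append,
      List.mem_singleton]
    tauto
  have hcyc : c.IsCycle := by
    rw [hc, Walk.cons_isCycle_iff]
    constructor
    · rw [Walk.isPath_def, hqsupp]
      refine List.Nodup.append hpath.support_nodup (List.nodup_singleton _) ?_
      intro a ha hb
      rw [List.mem_singleton] at hb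
      subst hb
      exact hvsupp ha
    · rw [hqedges]
      intro hmem
      rcases List.mem_append.mp hmem with h1 | h1
      · exact hvsupp (Walk.fst_mem_support_of_mem_edges p h1)
      · rw [List.mem_singleton] at h1
        rw [Sym2.eq_iff] at h1
        rcases h1 with ⟨h2, h3⟩ | ⟨h2, h3⟩
        · exact hvw.ne h2
        · exact huw h3
  have hedge_mem : ∀ x y, s(x, y) ∈ c.edges → c.toSubgraph.Adj x y :=
    fun x y hxy => (walk_toSubgraph_adj c).mpr hxy
  have hind : c.toSubgraph.IsInduced := by
    intro x hx y hy hadj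
    rw [Walk.mem_verts_toSubgraph] at hx hy
    have hx' : x = v ∨ x ∈ p.support := (hmem_s x).mp hx
    have hy' : y = v ∨ y ∈ p.support := (hmem_s y).mp hy
    have main : ∀ a, a ∈ p.support → G.Adj v a → c.toSubgraph.Adj v a := by
      intro a ha hadj'
      rcases hXadj a (hsupp a ha) hadj' with rfl | rfl
      · exact hedge_mem v a (by rw [hcedges]; exact List.mem_cons_self)
      · refine hedge_mem v a ?_
        rw [hcedges]
        refine List.mem_cons_of_mem _ (List.mem_append.mpr (Or.inr ?_))
        rw [List.mem_singleton]
        exact Sym2.eq_swap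
    rcases hx' with rfl | hx' <;> rcases hy' with rfl | hy'
    · exact absurd hadj (G.loopless.irrefl _)
    · exact main y hy' hadj
    · exact (main x hx' hadj.symm).symm
    · have hR : (rOn G X).Adj x y := ⟨hadj, hsupp x hx', hsupp y hy'⟩
      have := hchord x y hx' hy' hR
      rw [walk_toSubgraph_adj] at this
      refine hedge_mem x y ?_
      rw [hcedges]
      exact List.mem_cons_of_mem _ (List.mem_append.mpr (Or.inl this))
  -- a second interior vertex
  have hpnil : ¬ p.Nil := by
    rw [Walk.not_nil_iff_lt_length]
    omega
  obtain ⟨z, hz, t, hpt⟩ := Walk.not_nil_iff.mp hpnil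
  have hzsupp : z ∈ p.support := by
    rw [hpt, Walk.support_cons]
    exact List.mem_cons_of_mem _ t.start_mem_support
  have hzu : z ≠ u := hz.ne'
  have hzw : z ≠ w := by
    rintro rfl
    exact hnuw hz.1
  have hzv : z ≠ v := fun h => hvX (h ▸ hsupp z hzsupp)
  have husupp : u ∈ p.support := p.start_mem_support
  have hwsupp : w ∈ p.support := p.end_mem_support
  have hvu' : v ≠ u := hvu.ne
  have hvw' : v ≠ w := hvw.ne
  have hsub4 : ({v, u, w, z} : Set V) ⊆ s := by
    intro x hx
    rcases hx with rfl | rfl | rfl | rfl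
    · exact (hmem_s x).mpr (Or.inl rfl)
    · exact (hmem_s _).mpr (Or.inr husupp)
    · exact (hmem_s _).mpr (Or.inr hwsupp)
    · exact (hmem_s _).mpr (Or.inr hzsupp)
  have hncard4 : ({v, u, w, z} : Set V).ncard = 4 := by
    rw [Set.ncard_insert_of_notMem (by simp [hvu', hvw', hzv.symm, hvu, hvw]),
      Set.ncard_insert_of_notMem (by simp [huw, hzu.symm]),
      Set.ncard_insert_of_notMem (by simp [hzw.symm]), Set.ncard_singleton]
  have h4 : 4 ≤ s.ncard := by
    rw [← hncard4]
    exact Set.ncard_le_ncard hsub4 (Set.toFinite _)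
  refine ⟨s, ⟨⟨v, c, hcyc, hind, by rw [Walk.verts_toSubgraph]⟩, h4⟩, ?_, ?_, ?_⟩
  · intro x hx
    rcases (hmem_s x).mp hx with rfl | hx'
    · exact hvA
    · exact hXA x (hsupp x hx')
  · exact (hmem_s v).mpr (Or.inl rfl)
  · ext x
    simp only [Set.mem_setOf_eq, Set.mem_insert_iff, Set.mem_singleton_iff]
    constructor
    · rintro ⟨hxs, hadj⟩
      rcases (hmem_s x).mp hxs with rfl | hx'
      · exact absurd hadj (G.loopless.irrefl _)
      · exact hXadj x (hsupp x hx') hadj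
    · rintro (rfl | rfl)
      · exact ⟨(hmem_s _).mpr (Or.inr husupp), hvu⟩
      · exact ⟨(hmem_s _).mpr (Or.inr hwsupp), hvw⟩


/-- The set of non-edges (as unordered pairs) within `X`. -/
def NE (G : SimpleGraph V) (X : Set V) : Set (Set V) :=
  {p | ∃ x y : V, x ∈ X ∧ y ∈ X ∧ x ≠ y ∧ ¬ G.Adj x y ∧ p = {x, y}}

lemma NE_mono {G : SimpleGraph V} {X Y : Set V} (h : X ⊆ Y) : NE G X ⊆ NE G Y := by
  rintro p ⟨x, y, hx, hy, hne, hnadj, rfl⟩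
  exact ⟨x, y, h hx, h hy, hne, hnadj, rfl⟩

lemma clique_cover [Finite V] (G : SimpleGraph V) :
    ∀ n : ℕ, ∀ X : Set V, X.ncard ≤ n →
    ∃ (m : ℕ) (C : Fin (m + 1) → Set V),
      (∀ j, C j ⊆ X) ∧ (∀ j, (C j).Pairwise G.Adj) ∧ (⋃ j, C j) = X ∧
      m ≤ (NE G X).ncard := by
  intro n
  induction n with
  | zero =>
    intro X hX
    have hX0 : X = ∅ := by
      rw [← Set.ncard_eq_zero (Set.toFinite X)]
      omega
    subst hX0
    exact ⟨0, fun _ => ∅, fun _ => le_refl _, fun _ => Set.pairwise_empty _,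
      by simp, Nat.zero_le _⟩
  | succ n ih =>
    intro X hX
    by_cases hcl : X.Pairwise G.Adj
    · exact ⟨0, fun _ => X, fun _ => le_refl _, fun _ => hcl, Set.iUnion_const X, Nat.zero_le _⟩
    · have : ∃ x ∈ X, ∃ y ∈ X, x ≠ y ∧ ¬ G.Adj x y := by
        unfold Set.Pairwise at hcl
        push_neg at hcl
        obtain ⟨x, hx, y, hy, hne, hnadj⟩ := hcl
        exact ⟨x, hx, y, hy, hne, hnadj⟩
      obtain ⟨x, hx, y, hy, hne, hnadj⟩ := this
      have hXpos : 0 < X.ncard := (Set.ncard_pos (Set.toFinite _)).mpr ⟨x, hx⟩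
      have hcard' : (X \ {x}).ncard ≤ n := by
        have := Set.ncard_diff_singleton_lt_of_mem hx (Set.toFinite X)
        omega
      obtain ⟨m, C, hsub, hpw, hun, hcnt⟩ := ih (X \ {x}) hcard'
      refine ⟨m + 1, Fin.cons {x} C, ?_, ?_, ?_, ?_⟩
      · intro j
        refine Fin.cases ?_ ?_ j
        · rw [Fin.cons_zero]
          intro z hz
          rw [Set.mem_singleton_iff] at hz
          exact hz ▸ hx
        · intro i
          rw [Fin.cons_succ]
          exact fun z hz => (hsub i hz).1
      · intro j
        refine Fin.cases ?_ ?_ j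
        · rw [Fin.cons_zero]; exact Set.pairwise_singleton _ _
        · intro i; rw [Fin.cons_succ]; exact hpw i
      · ext z
        rw [Set.mem_iUnion]
        constructor
        · rintro ⟨j, hj⟩
          rcases Fin.eq_zero_or_eq_succ j with rfl | ⟨i, rfl⟩
          · rw [Fin.cons_zero, Set.mem_singleton_iff] at hj
            exact hj ▸ hx
          · rw [Fin.cons_succ] at hj
            exact (hsub i hj).1
        · intro hz
          by_cases hzx : z = x
          · exact ⟨0, by rw [Fin.cons_zero]; exact Set.mem_singleton_iff.mpr hzx⟩
          · have hzu : z ∈ ⋃ i, C i := hun ▸ (⟨hz, hzx⟩ : z ∈ X \ {x})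
            obtain ⟨i, hi⟩ := Set.mem_iUnion.mp hzu
            exact ⟨i.succ, by rw [Fin.cons_succ]; exact hi⟩
      · have hnotmem : ({x, y} : Set V) ∉ NE G (X \ {x}) := by
          rintro ⟨a, b, haX, hbX, -, -, heq⟩
          have hxab : x ∈ ({a, b} : Set V) := heq ▸ (Or.inl rfl : x ∈ ({x, y} : Set V))
          rcases hxab with rfl | rfl
          · exact haX.2 rfl
          · exact hbX.2 rfl
        have hins : insert ({x, y} : Set V) (NE G (X \ {x})) ⊆ NE G X := by
          rintro p (rfl | hp)
          · exact ⟨x, y, hx, hy, hne, hnadj, rfl⟩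
          · exact NE_mono Set.diff_subset hp
        have h1 : (insert ({x, y} : Set V) (NE G (X \ {x}))).ncard
            = (NE G (X \ {x})).ncard + 1 := Set.ncard_insert_of_notMem hnotmem (Set.toFinite _)
        have h2 : (insert ({x, y} : Set V) (NE G (X \ {x}))).ncard ≤ (NE G X).ncard :=
          Set.ncard_le_ncard hins (Set.toFinite _)
        omega


lemma isDagRel_union {W : Type*} {D' N : W → W → Prop} (hD' : IsDagRel D')
    (hdead : ∀ x y, N x y → ∀ z, ¬ (D' y z ∨ N y z)) :
    IsDagRel (fun x y => D' x y ∨ N x y) := by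
  intro w hw
  have key : ∀ a b : W, Relation.TransGen (fun x y => D' x y ∨ N x y) a b →
      Relation.TransGen D' a b ∨ ∀ z, ¬ (D' b z ∨ N b z) := by
    intro a b h
    induction h with
    | single h1 =>
      rcases h1 with h1 | h1
      · exact Or.inl (Relation.TransGen.single h1)
      · exact Or.inr (hdead _ _ h1)
    | tail hab hbc ih =>
      rcases ih with ih | ih
      · rcases hbc with h1 | h1
        · exact Or.inl (Relation.TransGen.tail ih h1)
        · exact Or.inr (hdead _ _ h1)
      · exact absurd hbc (ih _)
  rcases key w w hw with h | h
  · exact hD' w h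
  · obtain ⟨c, h1, -⟩ := (Relation.TransGen.head'_iff).mp hw
    exact h c h1

/-- The graph `G` restricted to `A`, viewed on the sum type with `k` extra vertices. -/
def pg (G : SimpleGraph V) (A : Set V) (k : ℕ) : SimpleGraph (V ⊕ Fin k) where
  Adj x y := ∃ u w, u ∈ A ∧ w ∈ A ∧ x = Sum.inl u ∧ y = Sum.inl w ∧ G.Adj u w
  symm := by constructor; rintro x y ⟨u, w, hu, hw, rfl, rfl, h⟩; exact ⟨w, u, hw, hu, rfl, rfl, h.symm⟩
  loopless := by
    constructor
    rintro x ⟨u, w, hu, hw, rfl, heq, h⟩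
    cases Sum.inl.inj heq
    exact G.loopless.irrefl _ h

lemma rec_empty {k : ℕ} (G : SimpleGraph V) (E : Set (Fin (k + 1))) (p₀ : V ⊕ Fin (k + 1)) :
    ∃ D : (V ⊕ Fin (k + 1)) → (V ⊕ Fin (k + 1)) → Prop,
      (∀ x y, D x y → (∃ u ∈ (∅ : Set V), x = Sum.inl u) ∧
        (y = p₀ ∨ (∃ u ∈ (∅ : Set V), y = Sum.inl u) ∨ (∃ e ∈ E, y = Sum.inr e))) ∧
      IsDagRel D ∧ competitionGraph D = pg G ∅ (k + 1) := by
  have hfalse : ∀ a b : V ⊕ Fin (k + 1), Relation.TransGen (fun _ _ => False) a b → False := by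
    intro a b h
    induction h with
    | single h => exact h
    | tail _ h => exact h
  refine ⟨fun _ _ => False, fun x y h => h.elim, fun w hw => hfalse w w hw, ?_⟩
  · ext x y
    constructor
    · rintro ⟨hne, t, ht, -⟩
      exact ht.elim
    · rintro ⟨u, w, hu, -⟩
      exact hu.elim

lemma rec_main [Fintype V] (G : SimpleGraph V) (k : ℕ) :
    ∀ n : ℕ, ∀ A : Set V, A.ncard ≤ n → ∀ (E : Set (Fin (k + 1))) (p₀ : V ⊕ Fin (k + 1)),
      (∀ u ∈ A, p₀ ≠ Sum.inl u) → (∀ e ∈ E, p₀ ≠ Sum.inr e) →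
      {s : Set V | IsHole G s ∧ s ⊆ A}.ncard ≤ E.ncard →
      ∃ D : (V ⊕ Fin (k + 1)) → (V ⊕ Fin (k + 1)) → Prop,
        (∀ x y, D x y → (∃ u ∈ A, x = Sum.inl u) ∧
          (y = p₀ ∨ (∃ u ∈ A, y = Sum.inl u) ∨ (∃ e ∈ E, y = Sum.inr e))) ∧
        IsDagRel D ∧ competitionGraph D = pg G A (k + 1) := by
  intro n
  induction n with
  | zero =>
    intro A hA E p₀ hp₀l hp₀r hE
    have hA0 : A = ∅ := by
      rw [← Set.ncard_eq_zero (Set.toFinite _)]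
      omega
    subst hA0
    exact rec_empty G E p₀
  | succ n ih =>
    intro A hA E p₀ hp₀l hp₀r hE
    classical
    rcases Set.eq_empty_or_nonempty A with rfl | hAne
    · exact rec_empty G E p₀
    obtain ⟨v, hvA, hvgood⟩ := exists_good G A hAne
    set Xv : Set V := {x | x ∈ A ∧ G.Adj v x} with hXv_def
    set HT : Set (Set V) := {s | IsHole G s ∧ s ⊆ A ∧ v ∈ s} with hHT_def
    -- each non-edge of the neighbourhood yields a hole through v
    have hkey : ∀ p ∈ NE G Xv, ∃ s : Set V,
        (IsHole G s ∧ s ⊆ A ∧ v ∈ s) ∧ {x | x ∈ s ∧ G.Adj v x} = p := by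
      rintro p ⟨x, y, ⟨hxA, hxadj⟩, ⟨hyA, hyadj⟩, hne, hnadj, rfl⟩
      have hre := hvgood x y hxA hyA hne hxadj hyadj hnadj
      obtain ⟨s, hs1, hs2, hs3, hs4⟩ := exists_hole G hvA hxA hyA hxadj hyadj hne hnadj hre
      exact ⟨s, ⟨hs1, hs2, hs3⟩, hs4⟩
    choose f hf using hkey
    set g : Set V → Set V := fun p => if hp : p ∈ NE G Xv then f p hp else ∅ with hg_def
    have hg1 : ∀ p ∈ NE G Xv,
        (IsHole G (g p) ∧ g p ⊆ A ∧ v ∈ g p) ∧ {x | x ∈ g p ∧ G.Adj v x} = p := by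
      intro p hp
      rw [hg_def]
      simp only [dif_pos hp]
      exact hf p hp
    have hNEcard : (NE G Xv).ncard ≤ HT.ncard := by
      refine Set.ncard_le_ncard_of_injOn g (fun p hp => (hg1 p hp).1) ?_ (Set.toFinite _)
      intro p hp p' hp' heq
      rw [← (hg1 p hp).2, ← (hg1 p' hp').2, heq]
    obtain ⟨m, C, hCsub, hCpw, hCun, hCcnt⟩ := clique_cover G Xv.ncard Xv le_rfl
    set holesA : Set (Set V) := {s | IsHole G s ∧ s ⊆ A} with hholesA_def
    set holesA' : Set (Set V) := {s | IsHole G s ∧ s ⊆ A \ {v}} with hholesA'_def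
    have hdisj2 : Disjoint HT holesA' := by
      rw [Set.disjoint_left]
      rintro s ⟨-, -, hvs⟩ ⟨-, hsub⟩
      exact (hsub hvs).2 rfl
    have hsubU : HT ∪ holesA' ⊆ holesA := by
      rintro s (⟨h1, h2, -⟩ | ⟨h1, h2⟩)
      · exact ⟨h1, h2⟩
      · exact ⟨h1, fun x hx => (h2 hx).1⟩
    have hsum : HT.ncard + holesA'.ncard ≤ holesA.ncard := by
      rw [← Set.ncard_union_eq hdisj2 (Set.toFinite _) (Set.toFinite _)]
      exact Set.ncard_le_ncard hsubU (Set.toFinite _)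
    have hmE : m ≤ E.ncard := by
      have h1 : m ≤ HT.ncard := le_trans hCcnt hNEcard
      omega
    obtain ⟨F, hFE, hFcard⟩ := Set.exists_subset_card_eq hmE
    have hFfin : F.Finite := Set.toFinite F
    have hFcard' : hFfin.toFinset.card = m := by
      rw [← Set.ncard_eq_toFinset_card]
      exact hFcard
    set eqv := hFfin.toFinset.equivFinOfCardEq hFcard' with heqv_def
    set e : Fin m → Fin (k + 1) := fun j => (eqv.symm j : Fin (k + 1)) with he_def
    have he_memF : ∀ j, e j ∈ F := fun j => hFfin.mem_toFinset.mp (eqv.symm j).2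
    have he_inj : Function.Injective e := fun i j h =>
      eqv.symm.injective (Subtype.ext h)
    set E' : Set (Fin (k + 1)) := E \ F with hE'_def
    have hE'card : E'.ncard + m = E.ncard := by
      rw [hE'_def, Set.ncard_diff hFE (Set.toFinite _), hFcard]
      exact Nat.sub_add_cancel hmE
    have hcardA' : (A \ {v}).ncard ≤ n := by
      have := Set.ncard_diff_singleton_lt_of_mem hvA (Set.toFinite A)
      omega
    have hbudget' : holesA'.ncard ≤ E'.ncard := by
      have h1 : m ≤ HT.ncard := le_trans hCcnt hNEcard
      omega
    obtain ⟨D', hinv', hdag', heq'⟩ := ih (A \ {v}) hcardA' E' (Sum.inl v)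
      (fun u hu heq => hu.2 (Sum.inl.inj heq).symm)
      (fun e' _ heq => by simp at heq) hbudget'
    set prey : Fin (m + 1) → V ⊕ Fin (k + 1) := Fin.cons p₀ (fun j => Sum.inr (e j))
      with hprey_def
    have hprey0 : prey 0 = p₀ := rfl
    have hpreysucc : ∀ i : Fin m, prey i.succ = Sum.inr (e i) := fun i => by
      rw [hprey_def]
      exact Fin.cons_succ _ _ _
    have hpreyfacts : ∀ (j : Fin (m + 1)) (x : V ⊕ Fin (k + 1)), ¬ D' x (prey j) := by
      intro j x h
      obtain ⟨-, hy⟩ := hinv' x _ h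
      rcases Fin.eq_zero_or_eq_succ j with rfl | ⟨i, rfl⟩
      · rw [hprey0] at hy
        rcases hy with heq | ⟨u2, hu2, heq⟩ | ⟨e2, he2, heq⟩
        · exact hp₀l v hvA heq
        · exact hp₀l u2 hu2.1 heq
        · exact hp₀r e2 he2.1 heq
      · rw [hpreysucc] at hy
        rcases hy with heq | ⟨u2, hu2, heq⟩ | ⟨e2, he2, heq⟩
        · simp at heq
        · simp at heq
        · exact he2.2 ((Sum.inr.inj heq) ▸ he_memF i)
    have hprey_inj : Function.Injective prey := by
      intro i j hij
      rcases Fin.eq_zero_or_eq_succ i with rfl | ⟨i', rfl⟩ <;>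
        rcases Fin.eq_zero_or_eq_succ j with rfl | ⟨j', rfl⟩
      · rfl
      · rw [hprey0, hpreysucc] at hij
        exact absurd hij (hp₀r (e j') (hFE (he_memF j')))
      · rw [hprey0, hpreysucc] at hij
        exact absurd hij.symm (hp₀r (e i') (hFE (he_memF i')))
      · rw [hpreysucc, hpreysucc] at hij
        rw [he_inj (Sum.inr.inj hij)]
    set N : (V ⊕ Fin (k + 1)) → (V ⊕ Fin (k + 1)) → Prop := fun x y =>
      ∃ (j : Fin (m + 1)) (u' : V), (u' ∈ C j ∨ u' = v) ∧ x = Sum.inl u' ∧ y = prey j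
      with hN_def
    refine ⟨fun x y => D' x y ∨ N x y, ?_, ?_, ?_⟩
    · rintro x y (hxy | ⟨j, u', hu', rfl, rfl⟩)
      · obtain ⟨⟨u, hu, rfl⟩, hy⟩ := hinv' x y hxy
        refine ⟨⟨u, hu.1, rfl⟩, ?_⟩
        rcases hy with rfl | ⟨u2, hu2, rfl⟩ | ⟨e2, he2, rfl⟩
        · exact Or.inr (Or.inl ⟨v, hvA, rfl⟩)
        · exact Or.inr (Or.inl ⟨u2, hu2.1, rfl⟩)
        · exact Or.inr (Or.inr ⟨e2, he2.1, rfl⟩)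
      · constructor
        · rcases hu' with h | rfl
          · exact ⟨u', (hCsub j h).1, rfl⟩
          · exact ⟨u', hvA, rfl⟩
        · rcases Fin.eq_zero_or_eq_succ j with rfl | ⟨i, rfl⟩
          · exact Or.inl hprey0
          · exact Or.inr (Or.inr ⟨e i, hFE (he_memF i), hpreysucc i⟩)
    · refine isDagRel_union hdag' ?_
      rintro x y ⟨j, u', hu', rfl, rfl⟩ z hz
      rcases hz with hz | hz
      · obtain ⟨⟨u2, hu2, heq2⟩, -⟩ := hinv' _ _ hz
        rcases Fin.eq_zero_or_eq_succ j with rfl | ⟨i, rfl⟩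
        · rw [hprey0] at heq2
          exact hp₀l u2 hu2.1 heq2
        · rw [hpreysucc] at heq2
          simp at heq2
      · obtain ⟨j2, u2, hu2, heq2, -⟩ := hz
        have hu2A : u2 ∈ A := by
          rcases hu2 with h | rfl
          · exact (hCsub j2 h).1
          · exact hvA
        rcases Fin.eq_zero_or_eq_succ j with rfl | ⟨i, rfl⟩
        · rw [hprey0] at heq2
          exact hp₀l u2 hu2A heq2
        · rw [hpreysucc] at heq2
          simp at heq2
    · ext x y
      constructor
      · rintro ⟨hne, t, hxt, hyt⟩
        rcases hxt with hxt | hxt <;> rcases hyt with hyt | hyt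
        · have hadj : (competitionGraph D').Adj x y := ⟨hne, t, hxt, hyt⟩
          rw [heq'] at hadj
          obtain ⟨u, w, hu, hw, rfl, rfl, hGuw⟩ := hadj
          exact ⟨u, w, hu.1, hw.1, rfl, rfl, hGuw⟩
        · obtain ⟨j, u', hu', rfl, rfl⟩ := hyt
          exact absurd hxt (hpreyfacts j x)
        · obtain ⟨j, u', hu', rfl, rfl⟩ := hxt
          exact absurd hyt (hpreyfacts j y)
        · obtain ⟨j, u', hu', rfl, hpj⟩ := hxt
          obtain ⟨j', w', hw', rfl, hpj'⟩ := hyt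
          have hjj : j = j' := hprey_inj (hpj.symm.trans hpj')
          subst hjj
          have hne' : u' ≠ w' := fun h => hne (h ▸ rfl)
          have hGadj : G.Adj u' w' := by
            rcases hu' with hu' | rfl <;> rcases hw' with hw' | rfl
            · exact hCpw j hu' hw' hne'
            · exact ((hCsub j hu').2).symm
            · exact (hCsub j hw').2
            · exact absurd rfl hne'
          have huA : u' ∈ A := by
            rcases hu' with h | rfl
            · exact (hCsub j h).1
            · exact hvA
          have hwA : w' ∈ A := by
            rcases hw' with h | rfl
            · exact (hCsub j h).1
            · exact hvA
          exact ⟨u', w', huA, hwA, rfl, rfl, hGadj⟩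
      · rintro ⟨u, w, huA, hwA, rfl, rfl, hGuw⟩
        have hne : (Sum.inl u : V ⊕ Fin (k + 1)) ≠ Sum.inl w := fun h => hGuw.ne (Sum.inl.inj h)
        rcases eq_or_ne u v with rfl | huv
        · have hwXv : w ∈ Xv := ⟨hwA, hGuw⟩
          have hwmem : w ∈ ⋃ j, C j := hCun ▸ hwXv
          obtain ⟨j, hj⟩ := Set.mem_iUnion.mp hwmem
          exact ⟨hne, prey j, Or.inr ⟨j, u, Or.inr rfl, rfl, rfl⟩,
            Or.inr ⟨j, w, Or.inl hj, rfl, rfl⟩⟩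
        · rcases eq_or_ne w v with rfl | hwv
          · have huXv : u ∈ Xv := ⟨huA, hGuw.symm⟩
            have humem : u ∈ ⋃ j, C j := hCun ▸ huXv
            obtain ⟨j, hj⟩ := Set.mem_iUnion.mp humem
            exact ⟨hne, prey j, Or.inr ⟨j, u, Or.inl hj, rfl, rfl⟩,
              Or.inr ⟨j, w, Or.inr rfl, rfl, rfl⟩⟩
          · have hadj : (competitionGraph D').Adj (Sum.inl u) (Sum.inl w) := by
              rw [heq']
              exact ⟨u, w, ⟨huA, huv⟩, ⟨hwA, hwv⟩, rfl, rfl, hGuw⟩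
            obtain ⟨-, t, h1, h2⟩ := hadj
            exact ⟨hne, t, Or.inl h1, Or.inl h2⟩


/-- If a graph has at most `k` holes, then its competition number is at most `k + 1`. -/
theorem competitionNumber_le_holeCount_add_one [Fintype V] (G : SimpleGraph V) (k : ℕ)
    (hk : holeCount G ≤ k) : competitionNumber G ≤ k + 1 := by
  classical
  set E : Set (Fin (k + 1)) := {x | x ≠ 0} with hE_def
  have hEcard : E.ncard = k := by
    have hEeq : E = Set.univ \ {0} := by
      ext x
      simp [hE_def]
    rw [hEeq, Set.ncard_diff (Set.subset_univ _) (Set.toFinite _), Set.ncard_univ,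
      Set.ncard_singleton, Nat.card_eq_fintype_card, Fintype.card_fin]
    omega
  have hhole : {s : Set V | IsHole G s ∧ s ⊆ Set.univ}.ncard ≤ E.ncard := by
    rw [hEcard]
    refine le_trans (le_of_eq ?_) hk
    unfold holeCount
    congr 1
    ext s
    simp
  obtain ⟨D, hinv, hdag, hcomp⟩ := rec_main G k Set.univ.ncard Set.univ le_rfl E (Sum.inr 0)
    (fun u _ h => by simp at h) (fun e' he' h => he' (Sum.inr.inj h).symm) hhole
  have hpgeq : pg G Set.univ (k + 1) = addIsolated G (k + 1) := by
    ext x y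
    constructor
    · rintro ⟨u, w, -, -, rfl, rfl, h⟩
      exact ⟨u, w, rfl, rfl, h⟩
    · rintro ⟨u, w, rfl, rfl, h⟩
      exact ⟨u, w, trivial, trivial, rfl, rfl, h⟩
  exact Nat.sInf_le ⟨D, hdag, by rw [hcomp, hpgeq]⟩

end CompKim
end

section
/- Let G be a quasi-line graph without simplicial vertices that admits a pleasant fuzzy reconstruction without fuzzy pairs. Then one can associate with every vertex v of G two cliques C_v^1, C_v^2 such that: (a) C_v^1 and C_v^2 together cover all edges incident with v; and (b) for every v and each j ∈ {1,2}, there exists a vertex v' ≠ v and j' ∈ {1,2} with C_{v'}^{j'} = C_v^j. -/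
namespace CompKim

open SimpleGraph

variable {V : Type*}

/-- A quasi-line graph: the neighborhood of every vertex can be covered by at most two
cliques. -/
def QuasiLine {α : Type*} (G : SimpleGraph α) : Prop :=
  ∀ v : α, ∃ s t : Set α, G.IsClique s ∧ G.IsClique t ∧ G.neighborSet v = s ∪ t

/-- `T` is (the subgraph of) a path in `H` with distinct endpoints `a` and `b`. -/
def IsPathBetween {W : Type*} (H : SimpleGraph W) (T : H.Subgraph) (a b : W) : Prop :=
  a ≠ b ∧ ∃ p : H.Walk a b, p.IsPath ∧ T = p.toSubgraph

/-- A fuzzy reconstruction of `G`: a graph `H`, a map `φ : V(G) → V(H)`, and a set of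
connected subtrees of `H` satisfying Properties 1–4 of Theorem 1. -/
structure FuzzyReconstruction {V W : Type*} (G : SimpleGraph V) (H : SimpleGraph W)
    (φ : V → W) (trees : Set H.Subgraph) : Prop where
  isTree : ∀ T ∈ trees, (SimpleGraph.Subgraph.coe T).IsTree
  adj_mem : ∀ v v' : V, G.Adj v v' → ∃ T ∈ trees, φ v ∈ T.verts ∧ φ v' ∈ T.verts
  nonadj_path : ∀ v v' : V, v ≠ v' → ¬ G.Adj v v' → ∀ T ∈ trees,
    φ v ∈ T.verts → φ v' ∈ T.verts → IsPathBetween H T (φ v) (φ v')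
  fuzzy_unique : ∀ v₁ v₁' v₂ v₂' : V, v₁ ≠ v₁' → ¬ G.Adj v₁ v₁' → v₂ ≠ v₂' →
    ¬ G.Adj v₂ v₂' → φ v₁ = φ v₂ → ∀ T₁ ∈ trees, ∀ T₂ ∈ trees,
    φ v₁ ∈ T₁.verts → φ v₁' ∈ T₁.verts → φ v₂ ∈ T₂.verts → φ v₂' ∈ T₂.verts → T₁ = T₂
  deg_three_unique : ∀ w : W, 3 ≤ (H.neighborSet w).ncard →
    ∀ T₁ ∈ trees, ∀ T₂ ∈ trees, w ∈ T₁.verts → w ∈ T₂.verts → T₁ = T₂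

/-- A fuzzy pair: two non-adjacent vertices whose images lie in a common tree. -/
def FuzzyPair {V W : Type*} (G : SimpleGraph V) {H : SimpleGraph W} (φ : V → W)
    (trees : Set H.Subgraph) (v v' : V) : Prop :=
  v ≠ v' ∧ ¬ G.Adj v v' ∧ ∃ T ∈ trees, φ v ∈ T.verts ∧ φ v' ∈ T.verts

/-- A pleasant fuzzy reconstruction: a fuzzy reconstruction additionally satisfying
Properties 5–9. -/
structure PleasantReconstruction {V W : Type*} (G : SimpleGraph V) (H : SimpleGraph W)
    (φ : V → W) (trees : Set H.Subgraph)
    extends FuzzyReconstruction G H φ trees : Prop where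
  fuzzy_witness : ∀ v v' : V, FuzzyPair G φ trees v v' →
    ∃ v'' : V, G.Adj v v'' ∧ φ v'' = φ v'
  deg_le_two : ∀ v : V, (H.neighborSet (φ v)).ncard ≤ 2
  tree_big : ∀ T ∈ trees, 2 ≤ T.verts.ncard
  leaf_image : ∀ T ∈ trees, ∀ w ∈ T.verts, (T.neighborSet w).ncard = 1 → ∃ v : V, φ v = w
  edges_union : H.edgeSet = ⋃ T ∈ trees, T.edgeSet
  no_inclusion : ∀ T₁ ∈ trees, ∀ T₂ ∈ trees, T₁.verts ⊆ T₂.verts → T₁ = T₂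

end CompKim

open SimpleGraph
namespace CompKim

variable {W : Type*}

def sideGraph (H : SimpleGraph W) (X : Set W) : SimpleGraph W where
  Adj x y := H.Adj x y ∧ x ∈ X ∧ y ∈ X
  symm := ⟨fun _ _ ⟨h, hx, hy⟩ => ⟨h.symm, hy, hx⟩⟩
  loopless := ⟨fun x ⟨h, _, _⟩ => H.loopless.irrefl x h⟩

variable {H : SimpleGraph W}

lemma sideGraph_support {X : Set W} {s t : W} (P : (sideGraph H X).Walk s t) (hs : s ∈ X) :
    ∀ x ∈ P.support, x ∈ X := by
  induction P with
  | nil => intro x hx; simp at hx; subst hx; exact hs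
  | cons h p ih =>
    intro x hx
    rcases List.mem_cons.mp (by simpa using hx) with rfl | hx'
    · exact hs
    · exact ih h.2.2 x hx'

lemma three_le_ncard_of_mem [Finite W] {S : Set W} {x y z : W}
    (hx : x ∈ S) (hy : y ∈ S) (hz : z ∈ S) (hxy : x ≠ y) (hxz : x ≠ z) (hyz : y ≠ z) :
    3 ≤ S.ncard := by
  have hsub : ({x, y, z} : Set W) ⊆ S := by
    intro u hu; rcases hu with rfl | rfl | rfl <;> assumption
  have h3 : ({x, y, z} : Set W).ncard = 3 := by
    rw [Set.ncard_insert_of_notMem (by simp [hxy, hxz]) (Set.toFinite _),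
      Set.ncard_pair hyz]
  calc 3 = ({x, y, z} : Set W).ncard := h3.symm
    _ ≤ S.ncard := Set.ncard_le_ncard hsub (Set.toFinite _)

/-- Key: two vertex-disjoint-type exits from the common region of two trees collide. -/
lemma keyG [Finite W] {A B : Set W} {w : W}
    (hdeg : ∀ s, s ∈ A → s ∈ B → (H.neighborSet s).ncard ≤ 2) :
    ∀ n : ℕ, ∀ s q q' z z' o : W,
    ∀ (P : (sideGraph H ((A ∩ B) \ {w})).Walk s q)
      (P' : (sideGraph H ((A ∩ B) \ {w})).Walk s q'),
    P.length + P'.length = n → P.IsPath → P'.IsPath → s ∈ (A ∩ B) \ {w} →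
    H.Adj s o → o ∈ A → o ∈ B → o ∉ P.support → o ∉ P'.support →
    H.Adj q z → z ∈ A → z ∉ B → H.Adj q' z' → z' ∈ B → z' ∉ A → False := by
  intro n
  induction n using Nat.strong_induction_on with
  | _ n ih =>
    intro s q q' z z' o P P' hlen hP hP' hs ho hoA hoB hoP hoP' hqz hzA hzB hq'z' hz'B hz'A
    cases P with
    | nil =>
      cases P' with
      | nil =>
        -- s = q = q'; neighbors o z z' distinct
        have h3 : 3 ≤ (H.neighborSet s).ncard :=
          three_le_ncard_of_mem (x := o) (y := z) (z := z')
            ((H.mem_neighborSet s o).mpr ho) ((H.mem_neighborSet s z).mpr hqz)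
            ((H.mem_neighborSet s z').mpr hq'z')
            (fun h => hzB (h ▸ hoB)) (fun h => hz'A (h ▸ hoA)) (fun h => hz'A (h ▸ hzA))
        exact absurd h3 (by have := hdeg s hs.1.1 hs.1.2; omega)
      | @cons _ b' _ h' p' =>
        have hb' : b' ∈ (A ∩ B) \ {w} := h'.2.2
        have h3 : 3 ≤ (H.neighborSet s).ncard :=
          three_le_ncard_of_mem (x := o) (y := z) (z := b')
            ((H.mem_neighborSet s o).mpr ho) ((H.mem_neighborSet s z).mpr hqz)
            ((H.mem_neighborSet s b').mpr h'.1)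
            (fun h => hzB (h ▸ hoB))
            (fun h => hoP' (by rw [h]; simp [Walk.support_cons]))
            (fun h => hzB (h ▸ hb'.1.2))
        exact absurd h3 (by have := hdeg s hs.1.1 hs.1.2; omega)
    | @cons _ b _ h p =>
      cases P' with
      | nil =>
        have hb : b ∈ (A ∩ B) \ {w} := h.2.2
        have h3 : 3 ≤ (H.neighborSet s).ncard :=
          three_le_ncard_of_mem (x := o) (y := z') (z := b)
            ((H.mem_neighborSet s o).mpr ho) ((H.mem_neighborSet s z').mpr hq'z')
            ((H.mem_neighborSet s b).mpr h.1)
            (fun hh => hz'A (hh ▸ hoA))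
            (fun hh => hoP (by rw [hh]; simp [Walk.support_cons]))
            (fun hh => hz'A (hh ▸ hb.1.1))
        exact absurd h3 (by have := hdeg s hs.1.1 hs.1.2; omega)
      | @cons _ b' _ h' p' =>
        have hb : b ∈ (A ∩ B) \ {w} := h.2.2
        have hb' : b' ∈ (A ∩ B) \ {w} := h'.2.2
        have hbo : b ≠ o := fun hh => hoP (by rw [← hh]; simp [Walk.support_cons])
        have hb'o : b' ≠ o := fun hh => hoP' (by rw [← hh]; simp [Walk.support_cons])
        -- s has ≤ 2 neighbors, among them o, b, b' with b ≠ o, b' ≠ o ⇒ b = b'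
        have hbb' : b = b' := by
          by_contra hne
          have h3 : 3 ≤ (H.neighborSet s).ncard :=
            three_le_ncard_of_mem (x := o) (y := b) (z := b')
              ((H.mem_neighborSet s o).mpr ho) ((H.mem_neighborSet s b).mpr h.1)
              ((H.mem_neighborSet s b').mpr h'.1) hbo.symm hb'o.symm hne
          exact absurd h3 (by have := hdeg s hs.1.1 hs.1.2; omega)
        subst hbb'
        exact ih (p.length + p'.length) (by simp [Walk.length_cons] at hlen; omega)
          b q q' z z' s p p' rfl hP.of_cons hP'.of_cons hb h.1.symm hs.1.1 hs.1.2
          ((Walk.cons_isPath_iff h p).mp hP).2 ((Walk.cons_isPath_iff h' p').mp hP').2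
          hqz hzA hzB hq'z' hz'B hz'A

end CompKim
-- FRAGMENT appended to aux2 for testing
namespace CompKim
open SimpleGraph
variable {W : Type*} {H : SimpleGraph W}

/-- The `a`-side of the vertex set `A` (of a tree) with respect to cut vertex `w`. -/
def aside (H : SimpleGraph W) (A : Set W) (w a : W) : Set W :=
  {z | z ∈ A ∧ z ≠ w ∧ (sideGraph H (A \ {w})).Reachable a z}

lemma aside_subset {A : Set W} {w a : W} : aside H A w a ⊆ A := fun _ h => h.1

/-- Walking inside `A \ {w}` starting from `a ∈ A ∩ B`, we either stay in `B`
(and are reachable within the common part), or we find an exit edge. -/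
lemma exists_exit {A B : Set W} {w a : W} :
    ∀ {t : W} (_ : (sideGraph H (A \ {w})).Walk t a), a ∈ B →
      (t ∈ B ∧ (sideGraph H ((A ∩ B) \ {w})).Reachable a t) ∨
      (∃ q z, (sideGraph H ((A ∩ B) \ {w})).Reachable a q ∧ q ∈ (A ∩ B) \ {w} ∧
        H.Adj q z ∧ z ∈ A ∧ z ∉ B ∧ z ≠ w) := by
  intro t P
  induction P with
  | nil => exact fun haB => Or.inl ⟨haB, Reachable.refl _⟩
  | @cons t b _ hadj p ih =>
    intro haB
    rcases ih haB with ⟨hbB, hreach⟩ | hexit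
    · by_cases htB : t ∈ B
      · left
        refine ⟨htB, hreach.trans (Adj.reachable ?_)⟩
        exact ⟨hadj.1.symm, ⟨⟨hadj.2.2.1, hbB⟩, hadj.2.2.2⟩, ⟨⟨hadj.2.1.1, htB⟩, hadj.2.1.2⟩⟩
      · right
        exact ⟨b, t, hreach, ⟨⟨hadj.2.2.1, hbB⟩, hadj.2.2.2⟩, hadj.1.symm,
          hadj.2.1.1, htB, hadj.2.1.2⟩
    · exact Or.inr hexit

/-- Lemma A: for two distinct trees `T ≠ T'` both containing `w` and `a` (with `w,a`
adjacent in `H`) and with all common vertices of degree ≤ 2, one of the two `a`-sides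
is contained in the other tree. -/
lemma aside_subset_or [Finite W] {A B : Set W} {w a : W}
    (hdeg : ∀ s, s ∈ A → s ∈ B → (H.neighborSet s).ncard ≤ 2)
    (hwa : H.Adj w a) (haA : a ∈ A) (haB : a ∈ B) (hwA : w ∈ A) (hwB : w ∈ B) :
    aside H A w a ⊆ B ∨ aside H B w a ⊆ A := by
  classical
  by_contra hcon
  push_neg at hcon
  rw [Set.not_subset] at hcon
  obtain ⟨⟨z₁, hz₁, hz₁B⟩, hcon2⟩ := hcon
  rw [Set.not_subset] at hcon2
  obtain ⟨z₂, hz₂, hz₂A⟩ := hcon2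
  -- exit on the A side
  obtain ⟨P₁⟩ := hz₁.2.2
  rcases exists_exit (w := w) P₁.reverse haB with ⟨hin, _⟩ | ⟨q, z, hreach, hq, hqz, hzA, hzB, hzw⟩
  · exact hz₁B hin
  obtain ⟨P₂⟩ := hz₂.2.2
  rcases exists_exit (w := w) P₂.reverse haA with ⟨hin, _⟩ | ⟨q', z', hreach', hq', hq'z', hz'B, hz'A, hz'w⟩
  · exact hz₂A hin
  -- transport reachability from (B ∩ A) to (A ∩ B)
  rw [Set.inter_comm B A] at hreach' hq'
  -- turn reachable into paths
  obtain ⟨Q₀⟩ := hreach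
  obtain ⟨Q₀'⟩ := hreach'
  have haS : a ∈ (A ∩ B) \ {w} := ⟨⟨haA, haB⟩, hwa.ne'⟩
  have hwQ : w ∉ Q₀.toPath.1.support := fun hmem =>
    (sideGraph_support Q₀.toPath.1 haS w hmem).2 rfl
  have hwQ' : w ∉ Q₀'.toPath.1.support := fun hmem =>
    (sideGraph_support Q₀'.toPath.1 haS w hmem).2 rfl
  exact keyG hdeg _ a q q' z z' w Q₀.toPath.1 Q₀'.toPath.1 rfl Q₀.toPath.2 Q₀'.toPath.2
    haS hwa.symm hwA hwB hwQ hwQ' hqz hzA hzB hq'z' hz'B hz'A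

end CompKim
namespace CompKim
open SimpleGraph
variable {W : Type*} {H : SimpleGraph W}

lemma reach_trans_side {X Y : Set W} : ∀ {s t : W} (_ : (sideGraph H X).Walk s t),
    (∀ u, (sideGraph H X).Reachable s u → u ∈ Y) → (sideGraph H Y).Reachable s t := by
  intro s t P
  induction P with
  | nil => intro _; exact Reachable.refl _
  | @cons u b t hadj p ih =>
    intro h
    have hb : ∀ x, (sideGraph H X).Reachable b x → x ∈ Y :=
      fun x hx => h x (hadj.reachable.trans hx)
    have : (sideGraph H Y).Adj u b :=
      ⟨hadj.1, h u (Reachable.refl _), hb b (Reachable.refl _)⟩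
    exact this.reachable.trans (ih hb)

lemma finset_exists_max {α : Type*} (R : α → α → Prop) :
    ∀ (fs : Finset α), fs.Nonempty →
      (∀ x ∈ fs, ∀ y ∈ fs, R x y ∨ R y x) →
      (∀ x ∈ fs, ∀ y ∈ fs, ∀ z ∈ fs, R x y → R y z → R x z) →
      ∃ m ∈ fs, ∀ x ∈ fs, R m x := by
  classical
  intro fs
  induction fs using Finset.induction_on with
  | empty => intro h; simp at h
  | @insert a s ha ih =>
    intro _ htot htrans
    rcases s.eq_empty_or_nonempty with rfl | hsne
    · refine ⟨a, by simp, ?_⟩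
      intro x hx
      have hxa : x = a := by simpa using hx
      subst hxa
      rcases htot x (by simp) x (by simp) with h | h <;> exact h
    · obtain ⟨m, hm, hmax⟩ := ih hsne
        (fun x hx y hy => htot x (Finset.mem_insert_of_mem hx) y (Finset.mem_insert_of_mem hy))
        (fun x hx y hy z hz => htrans x (Finset.mem_insert_of_mem hx)
          y (Finset.mem_insert_of_mem hy) z (Finset.mem_insert_of_mem hz))
      have hmi : m ∈ insert a s := Finset.mem_insert_of_mem hm
      have hai : a ∈ insert a s := Finset.mem_insert_self a s
      rcases htot m hmi a hai with h | h
      · refine ⟨m, hmi, ?_⟩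
        intro x hx
        rcases Finset.mem_insert.mp hx with rfl | hx
        · exact h
        · exact hmax x hx
      · refine ⟨a, hai, ?_⟩
        intro x hx
        rcases Finset.mem_insert.mp hx with rfl | hx
        · rcases htot x hx x hx with h' | h' <;> exact h'
        · exact htrans a hai m hmi x (Finset.mem_insert_of_mem hx) h (hmax x hx)

lemma set_exists_max {α : Type*} {s : Set α} (hfin : s.Finite) (hne : s.Nonempty)
    (R : α → α → Prop)
    (htot : ∀ x ∈ s, ∀ y ∈ s, R x y ∨ R y x)
    (htrans : ∀ x ∈ s, ∀ y ∈ s, ∀ z ∈ s, R x y → R y z → R x z) :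
    ∃ m ∈ s, ∀ x ∈ s, R m x := by
  classical
  obtain ⟨m, hm, hmax⟩ := finset_exists_max R hfin.toFinset
    (by simpa using hne)
    (fun x hx y hy => htot x (by simpa using hx) y (by simpa using hy))
    (fun x hx y hy z hz => htrans x (by simpa using hx) y (by simpa using hy)
      z (by simpa using hz))
  exact ⟨m, by simpa using hm, fun x hx => hmax x (by simpa using hx)⟩

instance subgraphFinite [Finite W] : Finite H.Subgraph :=
  Finite.of_injective (fun T => (T.verts, T.Adj))
    (fun T T2 h => by cases T; cases T2; simp_all)

/-- The trees containing both `w` and `a`. -/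
def TreesWA (trees : Set H.Subgraph) (w a : W) : Set H.Subgraph :=
  {T | T ∈ trees ∧ w ∈ T.verts ∧ a ∈ T.verts}

lemma exists_max_tree [Finite W] {trees : Set H.Subgraph}
    (hdeg3 : ∀ x : W, 3 ≤ (H.neighborSet x).ncard →
      ∀ T₁ ∈ trees, ∀ T₂ ∈ trees, x ∈ T₁.verts → x ∈ T₂.verts → T₁ = T₂)
    {w a : W} (hwa : H.Adj w a) (hne : (TreesWA trees w a).Nonempty) :
    ∃ Tm ∈ TreesWA trees w a, ∀ T' ∈ TreesWA trees w a,
      aside H T'.verts w a ⊆ Tm.verts := by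
  classical
  have key : ∀ T₁ ∈ TreesWA trees w a, ∀ T₂ ∈ TreesWA trees w a, T₁ ≠ T₂ →
      ∀ s, s ∈ T₁.verts → s ∈ T₂.verts → (H.neighborSet s).ncard ≤ 2 := by
    intro T₁ h₁ T₂ h₂ hne12 s hs1 hs2
    by_contra hcon
    exact hne12 (hdeg3 s (by omega) T₁ h₁.1 T₂ h₂.1 hs1 hs2)
  refine set_exists_max (Set.toFinite _) hne
    (fun Tm T' => aside H T'.verts w a ⊆ Tm.verts) ?_ ?_
  · intro T₁ h₁ T₂ h₂
    by_cases h12 : T₁ = T₂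
    · subst h12; left; exact aside_subset
    · rcases aside_subset_or (key T₁ h₁ T₂ h₂ h12) hwa h₁.2.2 h₂.2.2 h₁.2.1 h₂.2.1 with
        h | h
      · right; exact h
      · left; exact h
  · intro T h₁ T' h₂ T'' h₃ hR hR'
    -- hR : aside T' ⊆ T.verts, hR' : aside T'' ⊆ T'.verts; want aside T'' ⊆ T.verts
    intro z hz
    have haX : a ∈ T''.verts \ {w} := ⟨h₃.2.2, hwa.ne'⟩
    have hz' : z ∈ aside H T'.verts w a := by
      refine ⟨hR' hz, hz.2.1, ?_⟩
      obtain ⟨P⟩ := hz.2.2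
      refine reach_trans_side P ?_
      intro u hu
      obtain ⟨Pu⟩ := hu
      have huX : u ∈ T''.verts \ {w} :=
        sideGraph_support Pu haX u (Walk.end_mem_support Pu)
      have : u ∈ aside H T''.verts w a := ⟨huX.1, huX.2, ⟨Pu⟩⟩
      exact ⟨hR' this, huX.2⟩
    exact hR hz'

end CompKim
namespace CompKim
open SimpleGraph
variable {W : Type*} {H : SimpleGraph W}

lemma coe_walk_to_side {T : H.Subgraph} {w : W} :
    ∀ {x z : ↥T.verts} (p : T.coe.Walk x z), (∀ y ∈ p.support, (y : W) ≠ w) →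
      (sideGraph H (T.verts \ {w})).Reachable x z := by
  intro x z p
  induction p with
  | nil => intro _; exact Reachable.refl _
  | @cons u b t hadj q ih =>
    intro hsup
    have hT : T.Adj ↑u ↑b := (T.coe_adj u b) ▸ hadj
    have hu : (u : W) ∈ T.verts \ {w} :=
      ⟨u.2, hsup u (Walk.start_mem_support _)⟩
    have hb : (b : W) ∈ T.verts \ {w} :=
      ⟨b.2, hsup b (by simp [Walk.support_cons])⟩
    have hadj' : (sideGraph H (T.verts \ {w})).Adj u b := ⟨hT.adj_sub, hu, hb⟩
    exact hadj'.reachable.trans (ih fun y hy => hsup y (by simp [Walk.support_cons, hy]))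

lemma exists_subgraph_adj {T : H.Subgraph} (htree : T.coe.IsTree)
    (hbig : 2 ≤ T.verts.ncard) {w : W} (hw : w ∈ T.verts) : ∃ x, T.Adj w x := by
  obtain ⟨z, hz, hzw⟩ := Set.exists_ne_of_one_lt_ncard (s := T.verts) (by omega) w
  have hne : (⟨w, hw⟩ : ↥T.verts) ≠ ⟨z, hz⟩ := by
    intro h; exact hzw (congrArg Subtype.val h).symm
  obtain ⟨P⟩ := htree.isConnected.preconnected ⟨w, hw⟩ ⟨z, hz⟩
  obtain ⟨b, hadj, _, _⟩ := Walk.exists_eq_cons_of_ne hne P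
  exact ⟨↑b, (T.coe_adj ⟨w, hw⟩ b) ▸ hadj⟩

lemma mem_aside_of_mem {T : H.Subgraph} (htree : T.coe.IsTree) {w z : W}
    (hw : w ∈ T.verts) (hz : z ∈ T.verts) (hzw : z ≠ w) :
    ∃ x, T.Adj w x ∧ z ∈ aside H T.verts w x := by
  classical
  obtain ⟨P₀⟩ := htree.isConnected.preconnected ⟨w, hw⟩ ⟨z, hz⟩
  have hne : (⟨w, hw⟩ : ↥T.verts) ≠ ⟨z, hz⟩ := by
    intro h; exact hzw (congrArg Subtype.val h).symm
  obtain ⟨b, hadj, p', hpeq⟩ := Walk.exists_eq_cons_of_ne hne P₀.toPath.1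
  have hpath : (Walk.cons hadj p').IsPath := hpeq ▸ P₀.toPath.2
  have hnomem : (⟨w, hw⟩ : ↥T.verts) ∉ p'.support :=
    ((Walk.cons_isPath_iff hadj p').mp hpath).2
  refine ⟨↑b, (T.coe_adj ⟨w, hw⟩ b) ▸ hadj, hz, hzw, ?_⟩
  refine coe_walk_to_side p' ?_
  intro y hy hyw
  exact hnomem (by
    have : y = (⟨w, hw⟩ : ↥T.verts) := Subtype.ext hyw
    exact this ▸ hy)

lemma path_avoid_leaf {T : H.Subgraph} {ℓ : ↥T.verts}
    (hleaf : (T.neighborSet ↑ℓ).ncard = 1) {x z : ↥T.verts}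
    (p : T.coe.Walk x z) (hp : p.IsPath) (hx : x ≠ ℓ) (hz : z ≠ ℓ) :
    ℓ ∉ p.support := by
  classical
  intro hmem
  have hspec := p.take_spec hmem
  have hnodup : ((p.takeUntil ℓ hmem).append (p.dropUntil ℓ hmem)).support.Nodup := by
    rw [hspec]; exact hp.support_nodup
  rw [Walk.support_append] at hnodup
  have hdisj := List.disjoint_of_nodup_append hnodup
  -- successor on the drop part
  obtain ⟨s, hds, d', hdeq⟩ :=
    Walk.exists_eq_cons_of_ne (fun h => hz (h.symm)) (p.dropUntil ℓ hmem)
  -- predecessor: last vertex of the take part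
  obtain ⟨pp, hpps, t', hteq⟩ :=
    Walk.exists_eq_cons_of_ne (fun h => hx (h.symm)) (p.takeUntil ℓ hmem).reverse
  have hppmem : pp ∈ (p.takeUntil ℓ hmem).support := by
    have : pp ∈ (p.takeUntil ℓ hmem).reverse.support := by
      rw [hteq]; simp [Walk.support_cons]
    simpa [Walk.support_reverse] using this
  have hsmem : s ∈ (p.dropUntil ℓ hmem).support.tail := by
    rw [hdeq]; simp [Walk.support_cons]
  have hps : pp ≠ s := fun h => (hdisj hppmem (h ▸ hsmem))
  -- two distinct neighbors of ℓ
  have h1 : (↑pp : W) ∈ T.neighborSet ↑ℓ := by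
    have := (T.coe_adj ℓ pp) ▸ hpps
    exact this
  have h2 : (↑s : W) ∈ T.neighborSet ↑ℓ := by
    have := (T.coe_adj ℓ s) ▸ hds
    exact this

  obtain ⟨y, hy⟩ := Set.ncard_eq_one.mp hleaf
  rw [hy] at h1 h2
  exact hps (Subtype.ext (h1.trans h2.symm))

lemma verts_subset_aside_of_leaf {T : H.Subgraph} (htree : T.coe.IsTree)
    {ℓ x₀ : W} (hleaf : (T.neighborSet ℓ).ncard = 1) (hadj : T.Adj ℓ x₀) :
    T.verts \ {ℓ} ⊆ aside H T.verts ℓ x₀ := by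
  classical
  intro z hz
  have hℓ : ℓ ∈ T.verts := hadj.fst_mem
  have hx₀ : x₀ ∈ T.verts := hadj.snd_mem
  have hx₀ℓ : x₀ ≠ ℓ := hadj.adj_sub.ne'
  obtain ⟨P₀⟩ := htree.isConnected.preconnected ⟨x₀, hx₀⟩ ⟨z, hz.1⟩
  have havoid : (⟨ℓ, hℓ⟩ : ↥T.verts) ∉ P₀.toPath.1.support :=
    path_avoid_leaf hleaf P₀.toPath.1 P₀.toPath.2
      (fun h => hx₀ℓ (congrArg Subtype.val h))
      (fun h => hz.2 (congrArg Subtype.val h))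
  refine ⟨hz.1, hz.2, ?_⟩
  refine coe_walk_to_side P₀.toPath.1 ?_
  intro y hy hyℓ
  exact havoid (by
    have : y = (⟨ℓ, hℓ⟩ : ↥T.verts) := Subtype.ext hyℓ
    exact this ▸ hy)

end CompKim
namespace CompKim
open SimpleGraph
variable {W : Type*} {H : SimpleGraph W}

lemma exists_two_leaves_graph {U : Type*} [Fintype U] {Γ : SimpleGraph U}
    [DecidableRel Γ.Adj] (htree : Γ.IsTree) (hbig : 2 ≤ Fintype.card U) :
    ∃ u₁ u₂ : U, u₁ ≠ u₂ ∧ Γ.degree u₁ = 1 ∧ Γ.degree u₂ = 1 := by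
  classical
  have hedge := htree.card_edgeFinset
  have hsum := Γ.sum_degrees_eq_twice_card_edges
  have hdegpos : ∀ u : U, 1 ≤ Γ.degree u := by
    intro u
    obtain ⟨u', hu'⟩ := Fintype.exists_ne_of_one_lt_card (by omega) u
    obtain ⟨P⟩ := htree.isConnected.preconnected u u'
    obtain ⟨b, hadj, _, _⟩ := Walk.exists_eq_cons_of_ne hu'.symm P
    have : 0 < Γ.degree u := by
      rw [SimpleGraph.degree_pos_iff_exists_adj]
      exact ⟨b, hadj⟩
    omega
  set L := Finset.univ.filter (fun u : U => Γ.degree u = 1) with hLdef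
  have hL2 : 2 ≤ L.card := by
    by_contra hcon
    push_neg at hcon
    have hb : ∀ u : U, (if Γ.degree u = 1 then 1 else 2) ≤ Γ.degree u := by
      intro u
      by_cases h : Γ.degree u = 1
      · simp [h]
      · simp only [h, if_false]
        have := hdegpos u
        omega
    have hsum2 : ∑ u : U, (if Γ.degree u = 1 then 1 else 2) ≤
        ∑ u : U, Γ.degree u := Finset.sum_le_sum (fun u _ => hb u)
    rw [Finset.sum_ite, hsum] at hsum2
    simp only [Finset.sum_const, smul_eq_mul, mul_one] at hsum2
    have hsplit := Finset.card_filter_add_card_filter_not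
      (s := (Finset.univ : Finset U)) (p := fun u => Γ.degree u = 1)
    rw [Finset.card_univ] at hsplit
    rw [← hLdef] at hsum2 hsplit
    omega
  obtain ⟨u₁, hu₁, u₂, hu₂, hne⟩ := Finset.one_lt_card.mp (by omega : 1 < L.card)
  simp only [hLdef, Finset.mem_filter, Finset.mem_univ, true_and] at hu₁ hu₂
  exact ⟨u₁, u₂, hne, hu₁, hu₂⟩

lemma exists_two_leaves [Finite W] {T : H.Subgraph} (htree : T.coe.IsTree)
    (hbig : 2 ≤ T.verts.ncard) :
    ∃ ℓ₁ ℓ₂ : W, ℓ₁ ∈ T.verts ∧ ℓ₂ ∈ T.verts ∧ ℓ₁ ≠ ℓ₂ ∧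
      (T.neighborSet ℓ₁).ncard = 1 ∧ (T.neighborSet ℓ₂).ncard = 1 := by
  classical
  haveI : Fintype ↥T.verts := Fintype.ofFinite _
  haveI hdec : DecidableRel T.coe.Adj := Classical.decRel _
  have hcard : Fintype.card ↥T.verts = T.verts.ncard := by
    rw [← Nat.card_eq_fintype_card, Nat.card_coe_set_eq]
  obtain ⟨u₁, u₂, hne, hd₁, hd₂⟩ := exists_two_leaves_graph htree (by omega)
  have key : ∀ u : ↥T.verts, T.coe.degree u = 1 → (T.neighborSet (↑u : W)).ncard = 1 := by
    intro u hu
    obtain ⟨y, hy⟩ := Finset.card_eq_one.mp hu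
    have hyadj : T.coe.Adj u y := by
      have hmem : y ∈ T.coe.neighborFinset u := by
        rw [hy]; exact Finset.mem_singleton_self y
      exact (SimpleGraph.mem_neighborFinset _ _ _).mp hmem
    have hset : T.neighborSet (↑u : W) = {(↑y : W)} := by
      ext t
      simp only [Subgraph.mem_neighborSet, Set.mem_singleton_iff]
      constructor
      · intro ht
        have htv : t ∈ T.verts := ht.snd_mem
        have : (⟨t, htv⟩ : ↥T.verts) ∈ T.coe.neighborFinset u := by
          rw [SimpleGraph.mem_neighborFinset]
          exact (T.coe_adj u ⟨t, htv⟩).symm ▸ ht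
        rw [hy, Finset.mem_singleton] at this
        exact congrArg Subtype.val this
      · intro ht
        subst ht
        exact (T.coe_adj u y) ▸ hyadj
    rw [hset, Set.ncard_singleton]
  exact ⟨↑u₁, ↑u₂, u₁.2, u₂.2, fun h => hne (Subtype.ext h),
    key u₁ (by convert hd₁), key u₂ (by convert hd₂)⟩

end CompKim

namespace CompKim
open SimpleGraph

variable {V : Type*}

/-- Lemma 10 of the paper: for a quasi-line graph without simplicial vertices, given a
pleasant reconstruction without fuzzy pairs, every vertex can be assigned two cliques
covering its incident edges, each assigned clique being shared with another vertex. -/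

theorem exists_nicely_behaved_cliques [Fintype V] (G : SimpleGraph V)
    {W : Type*} [Fintype W] (H : SimpleGraph W) (φ : V → W) (trees : Set H.Subgraph)
    (hql : QuasiLine G) (hsimp : ∀ v : V, ¬ G.IsClique (G.neighborSet v))
    (hrec : PleasantReconstruction G H φ trees)
    (hnofuzz : ∀ v v' : V, ¬ FuzzyPair G φ trees v v') :
    ∃ C : V → Fin 2 → Set V,
      (∀ v j, G.IsClique (C v j)) ∧
      (∀ v u : V, G.Adj v u → ∃ j, v ∈ C v j ∧ u ∈ C v j) ∧
      (∀ v j, ∃ v' : V, v' ≠ v ∧ ∃ j', C v' j' = C v j) := by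
  classical
  -- preimages of trees are cliques
  have hclique : ∀ T ∈ trees, G.IsClique {u : V | φ u ∈ T.verts} := by
    intro T hT u hu u' hu' hne
    by_contra hadj
    exact hnofuzz u u' ⟨hne, hadj, T, hT, hu, hu'⟩
  -- choose, for every adjacent pair (w, a) with a tree containing both,
  -- a maximal tree for the a-side
  have hmax : ∀ w a : W, ∃ Tm : H.Subgraph,
      (H.Adj w a ∧ (TreesWA trees w a).Nonempty) →
      Tm ∈ TreesWA trees w a ∧
        ∀ T' ∈ TreesWA trees w a, aside H T'.verts w a ⊆ Tm.verts := by
    intro w a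
    by_cases h : H.Adj w a ∧ (TreesWA trees w a).Nonempty
    · obtain ⟨Tm, h1, h2⟩ := exists_max_tree hrec.deg_three_unique h.1 h.2
      exact ⟨Tm, fun _ => ⟨h1, h2⟩⟩
    · exact ⟨⊥, fun hh => absurd hh h⟩
  choose chosen hchosen using hmax
  -- every vertex has a side carrying a tree
  have hstar : ∀ v : V, ∃ x : W, H.Adj (φ v) x ∧ (TreesWA trees (φ v) x).Nonempty := by
    intro v
    have hne : (G.neighborSet v).Nonempty := by
      by_contra h
      rw [Set.not_nonempty_iff_eq_empty] at h
      exact hsimp v (by rw [h]; intro x hx; exact absurd hx (Set.notMem_empty x))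
    obtain ⟨u, hu⟩ := hne
    obtain ⟨T, hT, hv, hu'⟩ := hrec.adj_mem v u hu
    obtain ⟨x, hx⟩ := exists_subgraph_adj (hrec.isTree T hT) (hrec.tree_big T hT) hv
    exact ⟨x, hx.adj_sub, T, hT, hv, hx.snd_mem⟩
  choose xstar hxstar using hstar
  -- enumeration of the (at most two) H-neighbours of φ v
  have henum : ∀ v : V, ∃ f : Fin 2 → W, ∀ x, H.Adj (φ v) x → ∃ j, f j = x := by
    intro v
    have h2 := hrec.deg_le_two v
    by_cases hc0 : (H.neighborSet (φ v)).ncard = 0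
    · refine ⟨fun _ => φ v, fun x hx => ?_⟩
      have hmem : x ∈ H.neighborSet (φ v) := (H.mem_neighborSet _ _).mpr hx
      rw [Set.ncard_eq_zero (Set.toFinite _)] at hc0
      rw [hc0] at hmem
      exact absurd hmem (Set.notMem_empty x)
    by_cases hc1 : (H.neighborSet (φ v)).ncard = 1
    · obtain ⟨a, ha⟩ := Set.ncard_eq_one.mp hc1
      refine ⟨fun _ => a, fun x hx => ⟨0, ?_⟩⟩
      have hmem : x ∈ H.neighborSet (φ v) := (H.mem_neighborSet _ _).mpr hx
      rw [ha] at hmem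
      exact hmem.symm
    · have hc2 : (H.neighborSet (φ v)).ncard = 2 := by omega
      obtain ⟨a, b, hab, hNab⟩ := Set.ncard_eq_two.mp hc2
      refine ⟨![a, b], fun x hx => ?_⟩
      have hmem : x ∈ H.neighborSet (φ v) := (H.mem_neighborSet _ _).mpr hx
      rw [hNab] at hmem
      rcases hmem with h | h
      · exact ⟨0, by rw [h]; simp⟩
      · exact ⟨1, by rw [h]; simp⟩
  choose nb hnb using henum
  -- the tree assigned to vertex v and index j
  set Fv : V → Fin 2 → H.Subgraph := fun v j =>
    if H.Adj (φ v) (nb v j) ∧ (TreesWA trees (φ v) (nb v j)).Nonempty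
    then chosen (φ v) (nb v j) else chosen (φ v) (xstar v) with hFvdef
  have hFv : ∀ v j, Fv v j ∈ trees ∧ φ v ∈ (Fv v j).verts := by
    intro v j
    rw [hFvdef]
    dsimp only
    split_ifs with h
    · have := hchosen (φ v) (nb v j) h
      exact ⟨this.1.1, this.1.2.1⟩
    · have := hchosen (φ v) (xstar v) ⟨(hxstar v).1, (hxstar v).2⟩
      exact ⟨this.1.1, this.1.2.1⟩
  refine ⟨fun v j => {u : V | φ u ∈ (Fv v j).verts}, ?_, ?_, ?_⟩
  · -- cliques
    intro v j
    exact hclique (Fv v j) (hFv v j).1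
  · -- coverage
    intro v u hadj
    by_cases heq : φ u = φ v
    · refine ⟨0, (hFv v 0).2, ?_⟩
      show φ u ∈ (Fv v 0).verts
      rw [heq]
      exact (hFv v 0).2
    · obtain ⟨T₀, hT₀, hv0, hu0⟩ := hrec.adj_mem v u hadj
      obtain ⟨x, hxadj, hxaside⟩ := mem_aside_of_mem (hrec.isTree T₀ hT₀) hv0 hu0 heq
      obtain ⟨j, hj⟩ := hnb v x hxadj.adj_sub
      have hcond : H.Adj (φ v) (nb v j) ∧ (TreesWA trees (φ v) (nb v j)).Nonempty := by
        rw [hj]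
        exact ⟨hxadj.adj_sub, T₀, hT₀, hv0, hxadj.snd_mem⟩
      refine ⟨j, (hFv v j).2, ?_⟩
      show φ u ∈ (Fv v j).verts
      have hFeq : Fv v j = chosen (φ v) (nb v j) := by
        rw [hFvdef]; dsimp only; rw [if_pos hcond]
      rw [hFeq]
      have hmaxp := (hchosen (φ v) (nb v j) hcond).2
      rw [hj] at hmaxp ⊢
      exact hmaxp T₀ ⟨hT₀, hv0, hxadj.snd_mem⟩ hxaside
  · -- sharing
    intro v j
    have hFt : Fv v j ∈ trees := (hFv v j).1
    have hbig := hrec.tree_big (Fv v j) hFt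
    obtain ⟨ℓ₁, ℓ₂, h1v, h2v, h12, hl1, hl2⟩ :=
      exists_two_leaves (hrec.isTree (Fv v j) hFt) hbig
    have hpick : ∃ ℓ, ℓ ∈ (Fv v j).verts ∧ ℓ ≠ φ v ∧ ((Fv v j).neighborSet ℓ).ncard = 1 := by
      by_cases h : ℓ₁ = φ v
      · exact ⟨ℓ₂, h2v, by rw [← h]; exact h12.symm, hl2⟩
      · exact ⟨ℓ₁, h1v, h, hl1⟩
    obtain ⟨ℓ, hlv, hlne, hleaf⟩ := hpick
    obtain ⟨v', hv'⟩ := hrec.leaf_image (Fv v j) hFt ℓ hlv hleaf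
    have hv'ne : v' ≠ v := fun h => hlne (by rw [← hv', h])
    obtain ⟨y, hy⟩ := Set.ncard_eq_one.mp hleaf
    have hadj0 : (Fv v j).Adj ℓ y := by
      have : y ∈ (Fv v j).neighborSet ℓ := by rw [hy]; exact Set.mem_singleton y
      exact this
    obtain ⟨j', hj'⟩ := hnb v' y (by rw [hv']; exact hadj0.adj_sub)
    have hcond : H.Adj (φ v') (nb v' j') ∧ (TreesWA trees (φ v') (nb v' j')).Nonempty := by
      rw [hj', hv']
      exact ⟨hadj0.adj_sub, Fv v j, hFt, hlv, hadj0.snd_mem⟩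
    have hFeq : Fv v' j' = chosen (φ v') (nb v' j') := by
      rw [hFvdef]; dsimp only; rw [if_pos hcond]
    have hU := hchosen (φ v') (nb v' j') hcond
    set U := chosen (φ v') (nb v' j') with hUdef
    rw [hj', hv'] at hU
    -- U contains all of (Fv v j).verts
    have hsub : (Fv v j).verts ⊆ U.verts := by
      intro z hz
      by_cases hzℓ : z = ℓ
      · rw [hzℓ]; exact hU.1.2.1
      · exact hU.2 (Fv v j) ⟨hFt, hlv, hadj0.snd_mem⟩
          (verts_subset_aside_of_leaf (hrec.isTree (Fv v j) hFt) hleaf hadj0 ⟨hz, hzℓ⟩)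
    have hUF : Fv v j = U := hrec.no_inclusion (Fv v j) hFt U hU.1.1 hsub
    refine ⟨v', hv'ne, j', ?_⟩
    show {u : V | φ u ∈ (Fv v' j').verts} = {u : V | φ u ∈ (Fv v j).verts}
    rw [hFeq, ← hUF]

end CompKim
end
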